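/- arXiv:2305.02250 — 3 statements merged into one kernel-verified Lean document; each statement's English description precedes it below -/
import Mathlib

section
/- Let ν be a lattice path and δ an increment vector for ν. A (δ,ν)-tree T is completely determined by its row vector r(T): two (δ,ν)-trees with the same row vector are equal. Moreover, a vector (r_0, …, r_n) of integers is the row vector of some (δ,ν)-tree if and only if (1) r_i ≥ 0 for all i, (2) Σ_{i=0}^j r_i ≤ Σ_{i=0}^j ν_i for all 0 ≤ j ≤ n, and (3) Σ_{i=0}^n r_i = Σ_{i=0}^n ν_i. -/
/-!
Common definitions for the paper "The alt ν-Tamari lattices".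

A lattice path ν from (0,0) to (m,n) is encoded as the list (ν_0, ..., ν_n)
of its east-step block lengths (ν_0 initial east steps, ν_i the east steps
immediately following the i-th north step).  Thus `ν.length = n + 1` and
`ν.sum = m`.
-/

/-- `μ` is a ν-path: same endpoints as `ν` and weakly above `ν`. -/
def IsNuPath (ν μ : List ℕ) : Prop :=
  μ.length = ν.length ∧ (∀ j : ℕ, (μ.take j).sum ≤ (ν.take j).sum) ∧ μ.sum = ν.sum

/-! ### The ν-Dyck lattice -/

/-- The Dyck order: `P ≤ Q` iff `Q` lies weakly above `P`. -/
def dyckLE (P Q : List ℕ) : Prop := ∀ j : ℕ, (Q.take j).sum ≤ (P.take j).sum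

/-- Covering relation of the ν-Dyck lattice. -/
def dyckCovBy (ν P Q : List ℕ) : Prop :=
  IsNuPath ν P ∧ IsNuPath ν Q ∧ dyckLE P Q ∧ P ≠ Q ∧
    ∀ R, IsNuPath ν R → dyckLE P R → dyckLE R Q → R = P ∨ R = Q

/-- `[P,Q]` is a linear interval of length `ℓ` in the ν-Dyck lattice:
the interval is totally ordered and there is a maximal chain of length `ℓ`
from `P` to `Q`. -/
def IsDyckLinear (ν P Q : List ℕ) (ℓ : ℕ) : Prop :=
  IsNuPath ν P ∧ IsNuPath ν Q ∧ dyckLE P Q ∧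
  (∀ R S, IsNuPath ν R → IsNuPath ν S → dyckLE P R → dyckLE R Q →
    dyckLE P S → dyckLE S Q → dyckLE R S ∨ dyckLE S R) ∧
  ∃ c : ℕ → List ℕ, c 0 = P ∧ c ℓ = Q ∧ ∀ k, k < ℓ → dyckCovBy ν (c k) (c (k + 1))

/-- `[P,Q]` is a left interval in the ν-Dyck lattice: `Q` is obtained from `P`
by replacing a consecutive subword `E^ℓ N` by `N E^ℓ` (the `ℓ` east steps are
moved from the block before the `(i+1)`-st north step to the block after it). -/
def IsLeftDyck (ν P Q : List ℕ) (ℓ : ℕ) : Prop :=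
  IsNuPath ν P ∧ IsNuPath ν Q ∧ 1 ≤ ℓ ∧
  ∃ i, i + 1 < P.length ∧ ℓ ≤ P.getD i 0 ∧
    Q = (P.set i (P.getD i 0 - ℓ)).set (i + 1) (P.getD (i + 1) 0 + ℓ)

/-- `[P,Q]` is a right interval in the ν-Dyck lattice: `Q` is obtained from `P`
by replacing a consecutive subword `E N^ℓ` by `N^ℓ E`. -/
def IsRightDyck (ν P Q : List ℕ) (ℓ : ℕ) : Prop :=
  IsNuPath ν P ∧ IsNuPath ν Q ∧ 1 ≤ ℓ ∧
  ∃ i, i + ℓ < P.length ∧ 1 ≤ P.getD i 0 ∧ (∀ j, i < j → j < i + ℓ → P.getD j 0 = 0) ∧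
    Q = (P.set i (P.getD i 0 - 1)).set (i + ℓ) (P.getD (i + ℓ) 0 + 1)

/-! ### Increment vectors, δ-rotations and alt ν-Tamari posets -/

/-- `δ = (δ_1, …, δ_n)` is an increment vector with respect to `ν`:
`δ_i ≤ ν_i` for `1 ≤ i ≤ n`.  (List index `i` of `δ` holds `δ_{i+1}`.) -/
def IsIncrement (ν δ : List ℕ) : Prop :=
  δ.length + 1 = ν.length ∧ ∀ i, i < δ.length → δ.getD i 0 ≤ ν.getD (i + 1) 0

/-- `μ'` is the δ-rotation of `μ` at the valley preceding the `(i+1)`-st north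
step.  The δ-excursion starting with the `(i+1)`-st north step ends in block `k`
(the first block where the δ-altitude returns to its value at the valley), and
the east step of the valley is exchanged with this excursion, i.e. moved from
block `i` to block `k`. -/
def IsDeltaRotation (δ μ μ' : List ℕ) (i : ℕ) : Prop :=
  i + 1 < μ.length ∧ 1 ≤ μ.getD i 0 ∧
  ∃ k, i < k ∧ k < μ.length ∧
    (∑ t ∈ Finset.Ico i k, δ.getD t 0) ≤ (∑ t ∈ Finset.Ico (i + 1) (k + 1), μ.getD t 0) ∧
    (∀ k', i < k' → k' < k →
      (∑ t ∈ Finset.Ico (i + 1) (k' + 1), μ.getD t 0) < (∑ t ∈ Finset.Ico i k', δ.getD t 0)) ∧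
    μ' = (μ.set i (μ.getD i 0 - 1)).set k (μ.getD k 0 + 1)

/-- `Q` is obtained from `P` by a δ-rotation at some valley. -/
def DRot (δ P Q : List ℕ) : Prop := ∃ i, IsDeltaRotation δ P Q i

/-- The alt ν-Tamari order: reflexive transitive closure of δ-rotations. -/
def altLE (δ : List ℕ) : List ℕ → List ℕ → Prop := Relation.ReflTransGen (DRot δ)

/-- The path ν̌ = (ν̌_0, δ_1, …, δ_n) with ν̌_0 = Σν_i − Σδ_i. -/
def nuCheck (ν δ : List ℕ) : List ℕ := (ν.sum - δ.sum) :: δ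

/-- `μ'` is the ω-rotation (in the sense of the ν-Tamari lattice, defined via
the ω-altitude `alt_ω(x,y) = ω_0 + ⋯ + ω_y − x`) of `μ` at the valley preceding
the `(i+1)`-st north step: the east step of the valley is exchanged with the
subpath from the valley to the next lattice point of the same ω-altitude,
which ends in block `k`. -/
def IsNuRotation (ω μ μ' : List ℕ) (i : ℕ) : Prop :=
  i + 1 < μ.length ∧ 1 ≤ μ.getD i 0 ∧
  ∃ k, i < k ∧ k < μ.length ∧
    (ω.take (k + 1)).sum + (μ.take (i + 1)).sum ≤
      (ω.take (i + 1)).sum + (μ.take (k + 1)).sum ∧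
    (∀ k', i < k' → k' < k →
      (ω.take (i + 1)).sum + (μ.take (k' + 1)).sum <
        (ω.take (k' + 1)).sum + (μ.take (i + 1)).sum) ∧
    μ' = (μ.set i (μ.getD i 0 - 1)).set k (μ.getD k 0 + 1)

/-- The ω-Tamari order on ω-paths: closure of ω-rotations. -/
def tamLE (ω : List ℕ) : List ℕ → List ℕ → Prop :=
  Relation.ReflTransGen (fun P Q => ∃ i, IsNuRotation ω P Q i)

/-- Covering relation of the alt ν-Tamari poset `T_ν(δ)`. -/
def altCovBy (ν δ P Q : List ℕ) : Prop :=
  IsNuPath ν P ∧ IsNuPath ν Q ∧ altLE δ P Q ∧ P ≠ Q ∧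
    ∀ R, IsNuPath ν R → altLE δ P R → altLE δ R Q → R = P ∨ R = Q

/-- `[P,Q]` is a linear interval of length `ℓ` in the alt ν-Tamari poset. -/
def IsAltLinear (ν δ P Q : List ℕ) (ℓ : ℕ) : Prop :=
  IsNuPath ν P ∧ IsNuPath ν Q ∧ altLE δ P Q ∧
  (∀ R S, IsNuPath ν R → IsNuPath ν S → altLE δ P R → altLE δ R Q →
    altLE δ P S → altLE δ S Q → altLE δ R S ∨ altLE δ S R) ∧
  ∃ c : ℕ → List ℕ, c 0 = P ∧ c ℓ = Q ∧ ∀ k, k < ℓ → altCovBy ν δ (c k) (c (k + 1))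

/-! ### ω-trees -/

/-- The lattice points of the Ferrers diagram `F_ω` weakly above `ω`:
points `(x,y)` with `0 ≤ y ≤ n` and `x ≤ ω_0 + ⋯ + ω_y`. -/
def Lpts (ω : List ℕ) : Set (ℕ × ℕ) :=
  {p : ℕ × ℕ | p.2 < ω.length ∧ p.1 ≤ (ω.take (p.2 + 1)).sum}

/-- `p` and `q` are ω-incompatible: one is strictly southwest of the other and
the smallest rectangle containing them lies in `F_ω` (equivalently, its
bottom-right corner is a lattice point of `F_ω`). -/
def Incomp (ω : List ℕ) (p q : ℕ × ℕ) : Prop :=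
  ((p.1 < q.1 ∧ p.2 < q.2) ∨ (q.1 < p.1 ∧ q.2 < p.2)) ∧
    (max p.1 q.1, min p.2 q.2) ∈ Lpts ω

/-- All elements of `T` are pairwise ω-compatible. -/
def PairwiseCompat (ω : List ℕ) (T : Set (ℕ × ℕ)) : Prop :=
  ∀ p ∈ T, ∀ q ∈ T, ¬ Incomp ω p q

/-- An ω-tree: a maximal collection of pairwise ω-compatible points of `L_ω`. -/
def IsTree (ω : List ℕ) (T : Set (ℕ × ℕ)) : Prop :=
  T ⊆ Lpts ω ∧ PairwiseCompat ω T ∧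
    ∀ T', T ⊆ T' → T' ⊆ Lpts ω → PairwiseCompat ω T' → T' = T

/-- The ω-rotation of `T` at `q`: there are `p, r ∈ T` with `q` the lower-left
corner of the rectangle `p□r` (so `p` is above `q` in its column and `r` to the
right of `q` in its row), no other element of `T` lies in `p□r`, and `T'` is
obtained by replacing `q` by the upper-right corner of `p□r`. -/
def RotationAt (ω : List ℕ) (T : Set (ℕ × ℕ)) (q : ℕ × ℕ) (T' : Set (ℕ × ℕ)) : Prop :=
  ∃ p r, p ∈ T ∧ q ∈ T ∧ r ∈ T ∧ p.1 = q.1 ∧ q.2 < p.2 ∧ r.2 = q.2 ∧ q.1 < r.1 ∧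
    (∀ s ∈ T, q.1 ≤ s.1 → s.1 ≤ r.1 → q.2 ≤ s.2 → s.2 ≤ p.2 → s = p ∨ s = q ∨ s = r) ∧
    T' = insert (r.1, p.2) (T \ {q})

/-- `T'` is obtained from `T` by an ω-rotation. -/
def TreeRotation (ω : List ℕ) (T T' : Set (ℕ × ℕ)) : Prop := ∃ q, RotationAt ω T q T'

/-- One rotation step between ω-trees. -/
def tRot (ω : List ℕ) (T T' : Set (ℕ × ℕ)) : Prop :=
  IsTree ω T ∧ IsTree ω T' ∧ TreeRotation ω T T'

/-- The rotation order on ω-trees. -/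
def treeLE (ω : List ℕ) : Set (ℕ × ℕ) → Set (ℕ × ℕ) → Prop :=
  Relation.ReflTransGen (tRot ω)

/-- Covering relation of the rotation poset of ω-trees. -/
def treeCovBy (ω : List ℕ) (T T' : Set (ℕ × ℕ)) : Prop :=
  IsTree ω T ∧ IsTree ω T' ∧ treeLE ω T T' ∧ T ≠ T' ∧
    ∀ R, IsTree ω R → treeLE ω T R → treeLE ω R T' → R = T ∨ R = T'

/-- `[T,T']` is a linear interval of length `ℓ` in the rotation poset of ω-trees. -/
def IsTreeLinear (ω : List ℕ) (T T' : Set (ℕ × ℕ)) (ℓ : ℕ) : Prop :=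
  IsTree ω T ∧ IsTree ω T' ∧ treeLE ω T T' ∧
  (∀ R S, IsTree ω R → IsTree ω S → treeLE ω T R → treeLE ω R T' →
    treeLE ω T S → treeLE ω S T' → treeLE ω R S ∨ treeLE ω S R) ∧
  ∃ c : ℕ → Set (ℕ × ℕ), c 0 = T ∧ c ℓ = T' ∧ ∀ k, k < ℓ → treeCovBy ω (c k) (c (k + 1))

/-- `q 0, …, q ℓ` is a sequence of consecutive nodes of `T` in the same row,
ordered from left to right. -/
def ConsecRow (T : Set (ℕ × ℕ)) (q : ℕ → ℕ × ℕ) (ℓ : ℕ) : Prop :=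
  (∀ i, i ≤ ℓ → q i ∈ T) ∧ (∀ i, i ≤ ℓ → (q i).2 = (q 0).2) ∧
  (∀ i, i < ℓ → (q i).1 < (q (i + 1)).1) ∧
  (∀ i, i < ℓ → ∀ s ∈ T, s.2 = (q 0).2 → (q i).1 < s.1 → s.1 < (q (i + 1)).1 → False)

/-- `q 0, …, q ℓ` is a sequence of consecutive nodes of `T` in the same column,
ordered from bottom to top. -/
def ConsecCol (T : Set (ℕ × ℕ)) (q : ℕ → ℕ × ℕ) (ℓ : ℕ) : Prop :=
  (∀ i, i ≤ ℓ → q i ∈ T) ∧ (∀ i, i ≤ ℓ → (q i).1 = (q 0).1) ∧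
  (∀ i, i < ℓ → (q i).2 < (q (i + 1)).2) ∧
  (∀ i, i < ℓ → ∀ s ∈ T, s.1 = (q 0).1 → (q i).2 < s.2 → s.2 < (q (i + 1)).2 → False)

/-- `[T,T']` is a left interval of length `ℓ` in the rotation poset of ω-trees:
`T'` is obtained from `T` by applying `ℓ > 0` successive rotations at the first
`ℓ` nodes of a sequence `q 0, …, q ℓ` of consecutive nodes of `T` in the same
row, from left to right. -/
def IsLeftTreeItv (ω : List ℕ) (T T' : Set (ℕ × ℕ)) (ℓ : ℕ) : Prop :=
  IsTree ω T ∧ 1 ≤ ℓ ∧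
  ∃ q : ℕ → ℕ × ℕ, ConsecRow T q ℓ ∧
    ∃ c : ℕ → Set (ℕ × ℕ), c 0 = T ∧ c ℓ = T' ∧
      ∀ k, k < ℓ → RotationAt ω (c k) (q k) (c (k + 1))

/-- `[T,T']` is a right interval of length `ℓ` in the rotation poset of ω-trees:
`T'` is obtained from `T` by applying `ℓ > 0` successive rotations at the first
`ℓ` nodes of a sequence `q 0, …, q ℓ` of consecutive nodes of `T` in the same
column, from bottom to top. -/
def IsRightTreeItv (ω : List ℕ) (T T' : Set (ℕ × ℕ)) (ℓ : ℕ) : Prop :=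
  IsTree ω T ∧ 1 ≤ ℓ ∧
  ∃ q : ℕ → ℕ × ℕ, ConsecCol T q ℓ ∧
    ∃ c : ℕ → Set (ℕ × ℕ), c 0 = T ∧ c ℓ = T' ∧
      ∀ k, k < ℓ → RotationAt ω (c k) (q k) (c (k + 1))

/-! ### (δ,ν)-trees -/

/-- The lattice points `L_{δ,ν}` of the shape `F_{δ,ν}`: points of `L_ν̌` lying
weakly above the path ν̂ = W^{ν_0} N W^{ν_1−δ_1} ⋯ N W^{ν_n−δ_n} starting at
`(ν̌_0, 0)`.  At height `y` these are the `x` with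
`ν̌_0 − ν_0 − Σ_{i≤y}(ν_i−δ_i) ≤ x ≤ ν̌_0 + δ_1 + ⋯ + δ_y`, written here without
natural subtraction. -/
def Ldn (ν δ : List ℕ) : Set (ℕ × ℕ) :=
  {p : ℕ × ℕ | p.2 < ν.length ∧
    ν.sum ≤ p.1 + (ν.take (p.2 + 1)).sum + (δ.drop p.2).sum ∧
    p.1 ≤ ((nuCheck ν δ).take (p.2 + 1)).sum}

/-- A (δ,ν)-tree: a maximal collection of pairwise ν̌-compatible points of `L_{δ,ν}`. -/
def IsDNTree (ν δ : List ℕ) (T : Set (ℕ × ℕ)) : Prop :=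
  T ⊆ Ldn ν δ ∧ PairwiseCompat (nuCheck ν δ) T ∧
    ∀ T', T ⊆ T' → T' ⊆ Ldn ν δ → PairwiseCompat (nuCheck ν δ) T' → T' = T

/-- One ν̌-rotation step between (δ,ν)-trees. -/
def dnRot (ν δ : List ℕ) (T T' : Set (ℕ × ℕ)) : Prop :=
  IsDNTree ν δ T ∧ IsDNTree ν δ T' ∧ TreeRotation (nuCheck ν δ) T T'

/-- The rotation order on (δ,ν)-trees. -/
def dnLE (ν δ : List ℕ) : Set (ℕ × ℕ) → Set (ℕ × ℕ) → Prop :=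
  Relation.ReflTransGen (dnRot ν δ)

/-- Covering relation of the rotation poset of (δ,ν)-trees. -/
def dnCovBy (ν δ : List ℕ) (T T' : Set (ℕ × ℕ)) : Prop :=
  IsDNTree ν δ T ∧ IsDNTree ν δ T' ∧ dnLE ν δ T T' ∧ T ≠ T' ∧
    ∀ R, IsDNTree ν δ R → dnLE ν δ T R → dnLE ν δ R T' → R = T ∨ R = T'

/-- `[T,T']` is a left interval of length `ℓ` in the rotation poset of (δ,ν)-trees. -/
def IsLeftDNItv (ν δ : List ℕ) (T T' : Set (ℕ × ℕ)) (ℓ : ℕ) : Prop :=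
  IsDNTree ν δ T ∧ 1 ≤ ℓ ∧
  ∃ q : ℕ → ℕ × ℕ, ConsecRow T q ℓ ∧
    ∃ c : ℕ → Set (ℕ × ℕ), c 0 = T ∧ c ℓ = T' ∧
      ∀ k, k < ℓ → RotationAt (nuCheck ν δ) (c k) (q k) (c (k + 1))

/-- `[T,T']` is a right interval of length `ℓ` in the rotation poset of (δ,ν)-trees. -/
def IsRightDNItv (ν δ : List ℕ) (T T' : Set (ℕ × ℕ)) (ℓ : ℕ) : Prop :=
  IsDNTree ν δ T ∧ 1 ≤ ℓ ∧
  ∃ q : ℕ → ℕ × ℕ, ConsecCol T q ℓ ∧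
    ∃ c : ℕ → Set (ℕ × ℕ), c 0 = T ∧ c ℓ = T' ∧
      ∀ k, k < ℓ → RotationAt (nuCheck ν δ) (c k) (q k) (c (k + 1))

/-! ### Row vectors, column vectors, reduced column vectors -/

/-- Number of points of `T` at height `y`. -/
noncomputable def rowN (T : Set (ℕ × ℕ)) (y : ℕ) : ℕ := {p ∈ T | p.2 = y}.ncard

/-- Number of points of `T` in column `x`. -/
noncomputable def colTN (T : Set (ℕ × ℕ)) (x : ℕ) : ℕ := {p ∈ T | p.1 = x}.ncard

/-- Number of points of `L_{δ,ν}` in column `x`. -/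
noncomputable def colN (ν δ : List ℕ) (x : ℕ) : ℕ := {p ∈ Ldn ν δ | p.1 = x}.ncard

/-- `p` is a relevant point of `L_{δ,ν}`: it is not the leftmost point of its row. -/
def Relevant (ν δ : List ℕ) (p : ℕ × ℕ) : Prop :=
  p ∈ Ldn ν δ ∧ ∃ q ∈ Ldn ν δ, q.2 = p.2 ∧ q.1 < p.1

/-- Number of relevant points of `L_{δ,ν}` in column `x` (the reduced column at `x`). -/
noncomputable def rcolN (ν δ : List ℕ) (x : ℕ) : ℕ := {p ∈ Ldn ν δ | p.1 = x ∧ Relevant ν δ p}.ncard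

/-- Number of points of `T` in the reduced column at `x`. -/
noncomputable def rcolTN (ν δ : List ℕ) (T : Set (ℕ × ℕ)) (x : ℕ) : ℕ :=
  {p ∈ T | p.1 = x ∧ Relevant ν δ p}.ncard

/-- `j` lists the columns `j 0, …, j m` of `L_{δ,ν}` from shortest to longest,
reading from right to left among columns of equal length (here `m = ν.sum`). -/
def ColOrder (ν δ : List ℕ) (j : ℕ → ℕ) : Prop :=
  (∀ i, i ≤ ν.sum → j i ≤ ν.sum) ∧
  (∀ i i', i ≤ ν.sum → i' ≤ ν.sum → j i = j i' → i = i') ∧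
  (∀ i i', i < i' → i' ≤ ν.sum →
    colN ν δ (j i) < colN ν δ (j i') ∨ (colN ν δ (j i) = colN ν δ (j i') ∧ j i' < j i))

/-- `j` lists the reduced columns `j 0, …, j (m-1)` of `L_{δ,ν}` from shortest to
longest, reading from right to left among reduced columns of equal length. -/
def RColOrder (ν δ : List ℕ) (j : ℕ → ℕ) : Prop :=
  (∀ i, i < ν.sum → 1 ≤ j i ∧ j i ≤ ν.sum) ∧
  (∀ i i', i < ν.sum → i' < ν.sum → j i = j i' → i = i') ∧
  (∀ i i', i < i' → i' < ν.sum →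
    rcolN ν δ (j i) < rcolN ν δ (j i') ∨ (rcolN ν δ (j i) = rcolN ν δ (j i') ∧ j i' < j i))

/-- The entry `←ν_i` of the reversed path of `ν`: the number of north steps of
`ν` in column `m − i`. -/
def revNu (ν : List ℕ) (i : ℕ) : ℕ :=
  ((Finset.Ico 1 ν.length).filter (fun t => (ν.take t).sum + i = ν.sum)).card

/-! ### Auxiliary development for Statement 12 -/

namespace DN12

lemma sum_take_getD {M : Type*} [AddCommMonoid M] (l : List M) (j : ℕ) :
    (l.take j).sum = ∑ i ∈ Finset.range j, l.getD i 0 := by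
  induction l generalizing j with
  | nil => simp
  | cons a t ih =>
    cases j with
    | zero => simp
    | succ j =>
      rw [List.take_succ_cons, List.sum_cons, Finset.sum_range_succ', ih]
      simp [add_comm]

/-- Partial sum of block lengths. -/
def Sv (ν : List ℕ) (j : ℕ) : ℕ := ∑ i ∈ Finset.range j, ν.getD i 0

/-- Right end of row `y` of the shape. -/
def Bv (ν δ : List ℕ) (y : ℕ) : ℕ := (ν.sum - δ.sum) + Sv δ y

/-- Left end of row `y` of the shape. -/
def Av (ν δ : List ℕ) (y : ℕ) : ℕ := Bv ν δ y - Sv ν (y + 1)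

lemma Sv_take (ν : List ℕ) (j : ℕ) : (ν.take j).sum = Sv ν j := sum_take_getD ν j

lemma Sv_all (ν : List ℕ) {j : ℕ} (h : ν.length ≤ j) : Sv ν j = ν.sum := by
  rw [← Sv_take, List.take_of_length_le h]

lemma Sv_le_sum (ν : List ℕ) (j : ℕ) : Sv ν j ≤ ν.sum := by
  rcases le_total ν.length j with h | h
  · exact (Sv_all ν h).le
  · rw [← Sv_take]
    conv_rhs => rw [← List.take_append_drop j ν]
    rw [List.sum_append]; omega

lemma Sv_succ (ν : List ℕ) (j : ℕ) : Sv ν (j + 1) = Sv ν j + ν.getD j 0 :=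
  Finset.sum_range_succ _ j

variable {ν δ : List ℕ}

lemma getD_le (hδ : IsIncrement ν δ) (i : ℕ) : δ.getD i 0 ≤ ν.getD (i + 1) 0 := by
  rcases lt_or_ge i δ.length with h | h
  · exact hδ.2 i h
  · rw [List.getD_eq_default δ 0 h]; exact Nat.zero_le _

lemma seg_le (hδ : IsIncrement ν δ) (a b : ℕ) :
    (∑ i ∈ Finset.Ico a b, δ.getD i 0) ≤ ∑ i ∈ Finset.Ico (a + 1) (b + 1), ν.getD i 0 := by
  rw [Finset.sum_Ico_eq_sum_range, Finset.sum_Ico_eq_sum_range]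
  have hb : b + 1 - (a + 1) = b - a := by omega
  rw [hb]
  refine Finset.sum_le_sum fun i _ => ?_
  have := getD_le hδ (a + i)
  have h2 : a + 1 + i = a + i + 1 := by omega
  rw [h2]; exact this

lemma key1 (hδ : IsIncrement ν δ) (y : ℕ) :
    Sv ν (y + 1) + δ.sum ≤ ν.sum + Sv δ y := by
  have hlen : δ.length + 1 = ν.length := hδ.1
  have hds : δ.sum = Sv δ δ.length := (Sv_all δ le_rfl).symm
  rcases le_total δ.length y with h | h
  · have h1 : Sv δ y = δ.sum := Sv_all δ h
    have h2 : Sv ν (y + 1) ≤ ν.sum := Sv_le_sum ν _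
    omega
  · have h1 : Sv δ y + ∑ i ∈ Finset.Ico y δ.length, δ.getD i 0 = δ.sum := by
      rw [hds]; exact Finset.sum_range_add_sum_Ico _ h
    have h2 : Sv ν (y + 1) + ∑ i ∈ Finset.Ico (y + 1) ν.length, ν.getD i 0 = ν.sum := by
      rw [← Sv_all ν (le_refl ν.length)]
      exact Finset.sum_range_add_sum_Ico _ (by omega)
    have h3 := seg_le hδ y δ.length
    rw [hlen] at h3
    omega

lemma dsum_le (hδ : IsIncrement ν δ) : δ.sum ≤ ν.sum := by
  have := key1 hδ 0
  have h0 : Sv δ 0 = 0 := by simp [Sv]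
  omega

lemma Bd (hδ : IsIncrement ν δ) (y : ℕ) : Bv ν δ y + δ.sum = ν.sum + Sv δ y := by
  have := dsum_le hδ; unfold Bv; omega

lemma Sv_le_Bv (hδ : IsIncrement ν δ) (y : ℕ) : Sv ν (y + 1) ≤ Bv ν δ y := by
  have h1 := key1 hδ y
  have h2 := Bd hδ y
  omega

lemma AvBv (hδ : IsIncrement ν δ) (y : ℕ) : Av ν δ y + Sv ν (y + 1) = Bv ν δ y := by
  have := Sv_le_Bv hδ y; unfold Av; omega

lemma Av_le_Bv (hδ : IsIncrement ν δ) (y : ℕ) : Av ν δ y ≤ Bv ν δ y := by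
  have := AvBv hδ y; omega

lemma Bv_succ (y : ℕ) : Bv ν δ (y + 1) = Bv ν δ y + δ.getD y 0 := by
  unfold Bv; rw [Sv_succ]; omega

lemma Bv_mono (hδ : IsIncrement ν δ) {y y' : ℕ} (h : y ≤ y') : Bv ν δ y ≤ Bv ν δ y' := by
  unfold Bv
  have : Sv δ y ≤ Sv δ y' := by
    unfold Sv
    exact Finset.sum_le_sum_of_subset (Finset.range_subset_range.2 h)
  omega

lemma Av_rec (hδ : IsIncrement ν δ) (y : ℕ) :
    Av ν δ (y + 1) + ν.getD (y + 1) 0 = Av ν δ y + δ.getD y 0 := by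
  have h1 := AvBv hδ y
  have h2 := AvBv hδ (y + 1)
  have h3 := Bv_succ (ν := ν) (δ := δ) y
  have h4 := Sv_succ ν (y + 1)
  omega

lemma Av_anti (hδ : IsIncrement ν δ) {y y' : ℕ} (h : y ≤ y') : Av ν δ y' ≤ Av ν δ y := by
  induction y' with
  | zero =>
    have : y = 0 := by omega
    subst this; exact le_rfl
  | succ n ih =>
    rcases Nat.lt_or_ge y (n + 1) with h2 | h2
    · have := Av_rec hδ n
      have := getD_le hδ n
      have := ih (by omega)
      omega
    · have : y = n + 1 := by omega
      subst this; exact le_rfl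

lemma nuCheck_take (hδ : IsIncrement ν δ) (y : ℕ) :
    ((nuCheck ν δ).take (y + 1)).sum = Bv ν δ y := by
  unfold nuCheck
  rw [List.take_succ_cons, List.sum_cons, Sv_take]
  rfl

lemma nuCheck_length : (nuCheck ν δ).length = δ.length + 1 := by simp [nuCheck]

lemma mem_Ldn (hδ : IsIncrement ν δ) {p : ℕ × ℕ} :
    p ∈ Ldn ν δ ↔ p.2 < ν.length ∧ Av ν δ p.2 ≤ p.1 ∧ p.1 ≤ Bv ν δ p.2 := by
  unfold Ldn
  rw [Set.mem_setOf_eq, Sv_take, nuCheck_take hδ]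
  have h1 : Sv δ p.2 + (δ.drop p.2).sum = δ.sum := by
    rw [← Sv_take]
    conv_rhs => rw [← List.take_append_drop p.2 δ]
    rw [List.sum_append]
  have h2 := Bd hδ p.2
  have h3 := AvBv hδ p.2
  constructor
  · rintro ⟨hl, hx, hb⟩; exact ⟨hl, by omega, hb⟩
  · rintro ⟨hl, hx, hb⟩; exact ⟨hl, by omega, hb⟩

lemma Ldn_finite (hδ : IsIncrement ν δ) : (Ldn ν δ).Finite := by
  apply Set.Finite.subset (Set.Finite.prod (Set.finite_Iic ν.sum) (Set.finite_Iio ν.length))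
  intro p hp
  rw [mem_Ldn hδ] at hp
  have hB : Bv ν δ p.2 ≤ ν.sum := by
    have := Bd hδ p.2
    have := Sv_le_sum δ p.2
    omega
  exact ⟨by simpa using by omega, by simpa using hp.1⟩

lemma incomp_comm {ω : List ℕ} {p q : ℕ × ℕ} : Incomp ω p q ↔ Incomp ω q p := by
  unfold Incomp
  rw [max_comm, min_comm, or_comm]

lemma not_incomp_same {ω : List ℕ} {p q : ℕ × ℕ} (h : p.2 = q.2) : ¬ Incomp ω p q := by
  rintro ⟨h1 | h1, -⟩ <;> omega

lemma incomp_iff (hδ : IsIncrement ν δ) {p q : ℕ × ℕ} (h : p.2 < q.2) (hp : p.2 < ν.length) :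
    Incomp (nuCheck ν δ) p q ↔ p.1 < q.1 ∧ q.1 ≤ Bv ν δ p.2 := by
  have h5 := hδ.1
  have hmin : min p.2 q.2 = p.2 := by omega
  constructor
  · rintro ⟨h1 | h1, h2⟩
    · obtain ⟨h2a, h2b⟩ := h2
      have h2b' : max p.1 q.1 ≤ ((nuCheck ν δ).take (min p.2 q.2 + 1)).sum := h2b
      rw [hmin, nuCheck_take hδ] at h2b'
      exact ⟨h1.1, by omega⟩
    · omega
  · rintro ⟨h1, h2⟩
    refine ⟨Or.inl ⟨h1, h⟩, ?_, ?_⟩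
    · show min p.2 q.2 < (nuCheck ν δ).length
      rw [hmin, nuCheck_length]; omega
    · show max p.1 q.1 ≤ ((nuCheck ν δ).take (min p.2 q.2 + 1)).sum
      rw [hmin, nuCheck_take hδ]; omega

/-! Rows and allowed sets. -/

/-- Row `y` of a set of points. -/
def Rw (T : Set (ℕ × ℕ)) (y : ℕ) : Set ℕ := {x | (x, y) ∈ T}

/-- The set of positions in row `y` compatible with all points of `T` below row `y`. -/
def Alw (ν δ : List ℕ) (T : Set (ℕ × ℕ)) (y : ℕ) : Set ℕ :=
  {x | Av ν δ y ≤ x ∧ x ≤ Bv ν δ y ∧ ∀ p ∈ T, p.2 < y → x ≤ p.1 ∨ Bv ν δ p.2 < x}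

variable {T T' : Set (ℕ × ℕ)}

lemma Alw_finite (y : ℕ) : (Alw ν δ T y).Finite :=
  (Set.finite_Iic (Bv ν δ y)).subset fun _ hx => hx.2.1

lemma T_finite (hδ : IsIncrement ν δ) (hsub : T ⊆ Ldn ν δ) : T.Finite :=
  (Ldn_finite hδ).subset hsub

lemma Rw_finite (hδ : IsIncrement ν δ) (hsub : T ⊆ Ldn ν δ) (y : ℕ) : (Rw T y).Finite := by
  apply (Set.finite_Iic (Bv ν δ y)).subset
  intro x hx
  have := (mem_Ldn hδ).1 (hsub hx)
  exact this.2.2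

lemma compat_lt (hδ : IsIncrement ν δ) (hc : PairwiseCompat (nuCheck ν δ) T)
    (hsub : T ⊆ Ldn ν δ) {p q : ℕ × ℕ} (hp : p ∈ T) (hq : q ∈ T) (h : p.2 < q.2) :
    ¬(p.1 < q.1 ∧ q.1 ≤ Bv ν δ p.2) := by
  have hlen := ((mem_Ldn hδ).1 (hsub hp)).1
  rw [← incomp_iff hδ h hlen]
  exact hc p hp q hq

lemma rows_subset_Alw (hδ : IsIncrement ν δ) (hc : PairwiseCompat (nuCheck ν δ) T)
    (hsub : T ⊆ Ldn ν δ) (y : ℕ) : Rw T y ⊆ Alw ν δ T y := by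
  intro x hx
  have hmem := (mem_Ldn hδ).1 (hsub hx)
  refine ⟨hmem.2.1, hmem.2.2, fun p hp hpy => ?_⟩
  have := compat_lt hδ hc hsub hp hx hpy
  simp only at this ⊢
  omega

lemma mem_of_addable (hδ : IsIncrement ν δ) (hT : IsDNTree ν δ T) {x y : ℕ}
    (hy : y < ν.length) (h1 : Av ν δ y ≤ x) (h2 : x ≤ Bv ν δ y)
    (hlow : ∀ p ∈ T, p.2 < y → x ≤ p.1 ∨ Bv ν δ p.2 < x)
    (hup : ∀ q ∈ T, y < q.2 → q.1 ≤ x ∨ Bv ν δ y < q.1) : (x, y) ∈ T := by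
  have hxy : (x, y) ∈ Ldn ν δ := (mem_Ldn hδ).2 ⟨hy, h1, h2⟩
  have hcomp : ∀ q ∈ T, ¬ Incomp (nuCheck ν δ) (x, y) q := by
    intro q hq
    rcases Nat.lt_trichotomy y q.2 with hlt | heq | hgt
    · rw [incomp_iff hδ (p := (x, y)) hlt hy]
      have := hup q hq hlt
      simp only
      omega
    · exact not_incomp_same heq
    · rw [incomp_comm, incomp_iff hδ (q := (x, y)) hgt ((mem_Ldn hδ).1 (hT.1 hq)).1]
      have := hlow q hq hgt
      simp only
      omega
  have := hT.2.2 (insert (x, y) T) (Set.subset_insert _ _)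
    (by
      intro p hp
      rcases Set.mem_insert_iff.1 hp with rfl | hp
      · exact hxy
      · exact hT.1 hp)
    (by
      intro p hp q hq
      rcases Set.mem_insert_iff.1 hp with rfl | hp <;>
        rcases Set.mem_insert_iff.1 hq with rfl | hq
      · exact not_incomp_same rfl
      · exact hcomp q hq
      · rw [incomp_comm]; exact hcomp p hp
      · exact hT.2.1 p hp q hq)
  rw [← this]
  exact Set.mem_insert _ _

lemma up_closed (hδ : IsIncrement ν δ) (hT : IsDNTree ν δ T) {x x' y : ℕ}
    (hx : x ∈ Alw ν δ T y) (hx' : x' ∈ Rw T y) (hlt : x' < x) : x ∈ Rw T y := by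
  have hy : y < ν.length := ((mem_Ldn hδ).1 (hT.1 hx')).1
  obtain ⟨ha, hb, hc⟩ := hx
  apply mem_of_addable hδ hT hy ha hb hc
  intro q hq hq2
  have := compat_lt hδ hT.2.1 hT.1 hx' hq hq2
  simp only at this
  omega

lemma row_nonempty (hδ : IsIncrement ν δ) (hT : IsDNTree ν δ T) {y : ℕ}
    (hy : y < ν.length) : (Rw T y).Nonempty := by
  classical
  set U : Set (ℕ × ℕ) := {q ∈ T | y < q.2 ∧ q.1 ≤ Bv ν δ y} with hU
  have hUfin : U.Finite := (T_finite hδ hT.1).subset fun q hq => hq.1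
  rcases Set.eq_empty_or_nonempty U with hUe | hUne
  · refine ⟨Av ν δ y, mem_of_addable hδ hT hy le_rfl (Av_le_Bv hδ y) ?_ ?_⟩
    · intro p hp hpy
      have hA := ((mem_Ldn hδ).1 (hT.1 hp)).2.1
      have := Av_anti hδ hpy.le
      omega
    · intro q hq hqy
      have : q ∉ U := by rw [hUe]; exact Set.notMem_empty q
      simp only [hU, Set.mem_setOf_eq, not_and] at this
      right
      have := this hq
      omega
  · obtain ⟨q0, hq0U, hq0max⟩ := Set.exists_max_image U (fun q => q.1) hUfin hUne
    obtain ⟨hq0T, hq0y, hq0B⟩ := hq0U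
    rcases le_or_gt q0.1 (Av ν δ y) with hle | hgt
    · refine ⟨Av ν δ y, mem_of_addable hδ hT hy le_rfl (Av_le_Bv hδ y) ?_ ?_⟩
      · intro p hp hpy
        have hA := ((mem_Ldn hδ).1 (hT.1 hp)).2.1
        have := Av_anti hδ hpy.le
        omega
      · intro q hq hqy
        by_cases hqB : q.1 ≤ Bv ν δ y
        · have := hq0max q ⟨hq, hqy, hqB⟩
          omega
        · omega
    · refine ⟨q0.1, mem_of_addable hδ hT hy hgt.le hq0B ?_ ?_⟩
      · intro p hp hpy
        rcases le_or_gt q0.1 p.1 with h | h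
        · exact Or.inl h
        · right
          have := compat_lt hδ hT.2.1 hT.1 hp hq0T (by omega)
          omega
      · intro q hq hqy
        by_cases hqB : q.1 ≤ Bv ν δ y
        · exact Or.inl (hq0max q ⟨hq, hqy, hqB⟩)
        · omega

lemma top_full (hδ : IsIncrement ν δ) (hT : IsDNTree ν δ T) {x y : ℕ}
    (hy : y + 1 = ν.length) (hx : x ∈ Alw ν δ T y) : x ∈ Rw T y := by
  obtain ⟨ha, hb, hc⟩ := hx
  apply mem_of_addable hδ hT (by omega) ha hb hc
  intro q hq hqy
  have := ((mem_Ldn hδ).1 (hT.1 hq)).1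
  omega

/-- The key cardinality recursion for allowed sets. -/
lemma alw_card (hδ : IsIncrement ν δ) (hsub : T ⊆ Ldn ν δ)
    (hra : Rw T y ⊆ Alw ν δ T y)
    (hup : ∀ x ∈ Alw ν δ T y, ∀ x' ∈ Rw T y, x' < x → x ∈ Rw T y)
    (hne : (Rw T y).Nonempty) :
    (Alw ν δ T (y + 1)).ncard + (Rw T y).ncard
      = (Alw ν δ T y).ncard + 1 + ν.getD (y + 1) 0 := by
  classical
  set mn := sInf (Rw T y) with hmn
  have hmnmem : mn ∈ Rw T y := Nat.sInf_mem hne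
  have hmnle : ∀ z ∈ Rw T y, mn ≤ z := fun z hz => Nat.sInf_le hz
  have hmnA : mn ∈ Alw ν δ T y := hra hmnmem
  set P1 : Set ℕ := Alw ν δ T y ∩ Set.Iic mn with hP1
  set P2 : Set ℕ := Set.Ico (Av ν δ (y + 1)) (Av ν δ y) with hP2
  set P3 : Set ℕ := Set.Ioc (Bv ν δ y) (Bv ν δ (y + 1)) with hP3
  have hAv1 : Av ν δ (y + 1) ≤ Av ν δ y := Av_anti hδ (by omega)
  have hBv1 : Bv ν δ y ≤ Bv ν δ (y + 1) := Bv_mono hδ (by omega)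
  have hmnB : mn ≤ Bv ν δ y := hmnA.2.1
  have hmnAv : Av ν δ y ≤ mn := hmnA.1
  have hAvB := Av_le_Bv hδ y
  have hid : Alw ν δ T (y + 1) = (P1 ∪ P2) ∪ P3 := by
    ext x
    simp only [hP1, hP2, hP3, Set.mem_union, Set.mem_inter_iff, Set.mem_Iic, Set.mem_Ico,
      Set.mem_Ioc]
    constructor
    · rintro ⟨ha, hb, hc⟩
      by_cases hx1 : x < Av ν δ y
      · exact Or.inl (Or.inr ⟨ha, hx1⟩)
      · by_cases hx2 : Bv ν δ y < x
        · exact Or.inr ⟨hx2, hb⟩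
        · left; left
          refine ⟨⟨by omega, by omega, fun p hp hpy => hc p hp (by omega)⟩, ?_⟩
          have := hc (mn, y) hmnmem (by omega)
          simp only at this
          omega
    · rintro ((⟨⟨ha1, ha2, ha3⟩, hle⟩ | ⟨hb1, hb2⟩) | ⟨hc1, hc2⟩)
      · refine ⟨by omega, by omega, fun p hp hpy => ?_⟩
        rcases Nat.lt_or_ge p.2 y with h | h
        · exact ha3 p hp h
        · have hpy2 : p.2 = y := by omega
          left
          have : p.1 ∈ Rw T y := by
            show (p.1, y) ∈ T
            rw [← hpy2]
            exact hp
          have := hmnle p.1 this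
          omega
      · refine ⟨by omega, by omega, fun p hp hpy => ?_⟩
        have hA := ((mem_Ldn hδ).1 (hsub hp)).2.1
        have := Av_anti hδ (show p.2 ≤ y by omega)
        left; omega
      · refine ⟨by omega, by omega, fun p hp hpy => ?_⟩
        have hB := ((mem_Ldn hδ).1 (hsub hp)).2.2
        have := Bv_mono hδ (show p.2 ≤ y by omega)
        right; omega
  have hd12 : Disjoint P1 P2 := by
    rw [Set.disjoint_left]
    rintro x ⟨hx1, -⟩ ⟨-, hx2⟩
    have := hx1.1
    omega
  have hd3 : Disjoint (P1 ∪ P2) P3 := by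
    rw [Set.disjoint_left]
    rintro x (⟨hx1, -⟩ | ⟨-, hx2⟩) ⟨hx3, -⟩
    · have := hx1.2.1; omega
    · omega
  have hP1fin : P1.Finite := (Alw_finite y).subset Set.inter_subset_left
  have hP2fin : P2.Finite := Set.finite_Ico _ _
  have hP3fin : P3.Finite := Set.finite_Ioc _ _
  have hcard : (Alw ν δ T (y + 1)).ncard = P1.ncard + P2.ncard + P3.ncard := by
    rw [hid, Set.ncard_union_eq hd3 (hP1fin.union hP2fin) hP3fin,
      Set.ncard_union_eq hd12 hP1fin hP2fin]
  have hP2card : P2.ncard = Av ν δ y - Av ν δ (y + 1) := by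
    rw [hP2, ← Finset.coe_Ico, Set.ncard_coe_finset, Nat.card_Ico]
  have hP3card : P3.ncard = Bv ν δ (y + 1) - Bv ν δ y := by
    rw [hP3, ← Finset.coe_Ioc, Set.ncard_coe_finset, Nat.card_Ioc]
  -- split Alw y
  have hsplit : Alw ν δ T y = P1 ∪ (Rw T y \ {mn}) := by
    ext x
    simp only [hP1, Set.mem_union, Set.mem_inter_iff, Set.mem_Iic, Set.mem_diff,
      Set.mem_singleton_iff]
    constructor
    · intro hx
      rcases le_or_gt x mn with h | h
      · exact Or.inl ⟨hx, h⟩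
      · exact Or.inr ⟨hup x hx mn hmnmem h, by omega⟩
    · rintro (⟨hx, -⟩ | ⟨hx, -⟩)
      · exact hx
      · exact hra hx
  have hdsplit : Disjoint P1 (Rw T y \ {mn}) := by
    rw [Set.disjoint_left]
    rintro x ⟨-, hx1⟩ ⟨hx2, hx3⟩
    have := hmnle x hx2
    simp only [Set.mem_Iic] at hx1
    have hxe : x = mn := by omega
    exact hx3 (hxe ▸ rfl)
  have hRwfin : (Rw T y).Finite := Rw_finite hδ hsub y
  have hsplitcard : (Alw ν δ T y).ncard = P1.ncard + ((Rw T y).ncard - 1) := by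
    rw [hsplit, Set.ncard_union_eq hdsplit hP1fin (hRwfin.subset Set.diff_subset),
      Set.ncard_diff_singleton_of_mem hmnmem]
  have hRwpos : 1 ≤ (Rw T y).ncard := (Set.ncard_pos hRwfin).2 hne
  have hAv2 := Av_rec hδ y
  have hBv2 := Bv_succ (ν := ν) (δ := δ) y
  have hgle := getD_le hδ y
  omega

lemma alw_zero : Alw ν δ T 0 = Set.Icc (Av ν δ 0) (Bv ν δ 0) := by
  ext x
  simp only [Alw, Set.mem_setOf_eq, Set.mem_Icc]
  constructor
  · rintro ⟨h1, h2, -⟩; exact ⟨h1, h2⟩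
  · rintro ⟨h1, h2⟩; exact ⟨h1, h2, fun p _ hp => absurd hp (by omega)⟩

lemma alw_zero_card (hδ : IsIncrement ν δ) :
    (Alw ν δ T 0).ncard = ν.getD 0 0 + 1 := by
  rw [alw_zero, ← Finset.coe_Icc, Set.ncard_coe_finset, Nat.card_Icc]
  have h1 : Av ν δ 0 + Sv ν 1 = Bv ν δ 0 := AvBv hδ 0
  have h2 : Sv ν 1 = ν.getD 0 0 := by
    rw [Sv_succ]
    simp [Sv]
  omega

/-- Row counts and `rowN`. -/
lemma rowN_eq (T : Set (ℕ × ℕ)) (y : ℕ) : rowN T y = (Rw T y).ncard := by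
  unfold rowN
  have himg : {p ∈ T | p.2 = y} = (fun x => (x, y)) '' Rw T y := by
    ext p
    simp only [Set.mem_setOf_eq, Set.mem_image]
    constructor
    · rintro ⟨hT, hy⟩
      refine ⟨p.1, ?_, ?_⟩
      · show (p.1, y) ∈ T
        rw [← hy]
        exact hT
      · rw [← hy]
    · rintro ⟨x, hx, rfl⟩
      exact ⟨hx, rfl⟩
  rw [himg, Set.ncard_image_of_injective _ (fun a b h => by simpa using congrArg Prod.fst h)]

lemma ncard_eq_sum (hδ : IsIncrement ν δ) (hsub : T ⊆ Ldn ν δ) :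
    T.ncard = ∑ y ∈ Finset.range ν.length, (Rw T y).ncard := by
  classical
  have hfin : T.Finite := T_finite hδ hsub
  rw [Set.ncard_eq_toFinset_card T hfin, Finset.card_eq_sum_card_fiberwise
    (f := fun p : ℕ × ℕ => p.2) (t := Finset.range ν.length)
    (fun p hp => by
      rw [Finset.mem_coe, Set.Finite.mem_toFinset] at hp
      exact Finset.mem_coe.2 (Finset.mem_range.2 ((mem_Ldn hδ).1 (hsub hp)).1))]
  refine Finset.sum_congr rfl fun y _ => ?_
  rw [← rowN_eq]
  unfold rowN
  have he : {p ∈ T | p.2 = y} = ↑(hfin.toFinset.filter (fun p => p.2 = y)) := by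
    ext p
    simp [Set.Finite.mem_toFinset]
  rw [he, Set.ncard_coe_finset]

/-- Cardinality of the allowed set in terms of the rows below. -/
lemma alw_sum (hδ : IsIncrement ν δ) (hT : IsDNTree ν δ T) :
    ∀ y, y < ν.length →
      (Alw ν δ T y).ncard + (∑ i ∈ Finset.range y, (Rw T i).ncard)
        = Sv ν (y + 1) + 1 + y := by
  intro y
  induction y with
  | zero =>
    intro hy
    rw [alw_zero_card hδ]
    simp [Sv_succ, Sv]
  | succ n ih =>
    intro hy
    have hn : n < ν.length := by omega
    have h1 := ih hn
    have h2 := alw_card hδ hT.1 (rows_subset_Alw hδ hT.2.1 hT.1 n)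
      (fun x hx x' hx' h => up_closed hδ hT hx hx' h) (row_nonempty hδ hT hn)
    rw [Finset.sum_range_succ]
    have h3 := Sv_succ ν (n + 1)
    omega

lemma row_counts_le (hδ : IsIncrement ν δ) (hT : IsDNTree ν δ T) {y : ℕ} (hy : y < ν.length) :
    (∑ i ∈ Finset.range (y + 1), (Rw T i).ncard) ≤ Sv ν (y + 1) + 1 + y := by
  have h1 := alw_sum hδ hT y hy
  have h2 : (Rw T y).ncard ≤ (Alw ν δ T y).ncard :=
    Set.ncard_le_ncard (rows_subset_Alw hδ hT.2.1 hT.1 y) (Alw_finite y)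
  rw [Finset.sum_range_succ]
  omega

lemma row_counts_total (hδ : IsIncrement ν δ) (hν : ν ≠ []) (hT : IsDNTree ν δ T) :
    (∑ i ∈ Finset.range ν.length, (Rw T i).ncard) = ν.sum + ν.length := by
  have hlen : 1 ≤ ν.length := List.length_pos_iff.2 hν
  obtain ⟨n, hn⟩ : ∃ n, ν.length = n + 1 := ⟨ν.length - 1, by omega⟩
  have h1 := alw_sum hδ hT n (by omega)
  have h2 : Rw T n = Alw ν δ T n := by
    apply Set.Subset.antisymm (rows_subset_Alw hδ hT.2.1 hT.1 n)
    intro x hx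
    exact top_full hδ hT hn.symm hx
  have h3 : Sv ν (n + 1) = ν.sum := Sv_all ν (by omega)
  rw [hn, Finset.sum_range_succ, h2]
  omega

lemma tree_ncard (hδ : IsIncrement ν δ) (hν : ν ≠ []) (hT : IsDNTree ν δ T) :
    T.ncard = ν.sum + ν.length := by
  rw [ncard_eq_sum hδ hT.1, row_counts_total hδ hν hT]

/-- Two upward-closed subsets of a finite set of naturals with the same cardinality agree. -/
lemma upclosed_card_lt {A S1 S2 : Set ℕ} (hA : A.Finite) (h1 : S1 ⊆ A) (h2 : S2 ⊆ A)
    (u2 : ∀ x ∈ A, ∀ s ∈ S2, s < x → x ∈ S2)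
    (u1 : ∀ x ∈ A, ∀ s ∈ S1, s < x → x ∈ S1)
    {x : ℕ} (hx1 : x ∈ S1) (hx2 : x ∉ S2) : S2.ncard < S1.ncard := by
  have hsub : S2 ⊆ S1 \ {x} := by
    intro s hs
    rcases Nat.lt_trichotomy s x with h | h | h
    · exact absurd (u2 x (h1 hx1) s hs h) hx2
    · exact absurd (h ▸ hs) hx2
    · exact ⟨u1 s (h2 hs) x hx1 h, fun he => by simp at he; omega⟩
  calc S2.ncard ≤ (S1 \ {x}).ncard :=
        Set.ncard_le_ncard hsub ((hA.subset h1).subset Set.diff_subset)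
    _ < S1.ncard := Set.ncard_diff_singleton_lt_of_mem hx1 (hA.subset h1)

lemma upclosed_eq {A S1 S2 : Set ℕ} (hA : A.Finite) (h1 : S1 ⊆ A) (h2 : S2 ⊆ A)
    (u1 : ∀ x ∈ A, ∀ s ∈ S1, s < x → x ∈ S1)
    (u2 : ∀ x ∈ A, ∀ s ∈ S2, s < x → x ∈ S2)
    (hc : S1.ncard = S2.ncard) : S1 = S2 := by
  by_cases hs : S1 ⊆ S2
  · exact (Set.eq_of_subset_of_ncard_le hs hc.ge (hA.subset h2)).symm ▸ rfl
  · obtain ⟨x, hx1, hx2⟩ := Set.not_subset.1 hs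
    have := upclosed_card_lt hA h1 h2 u2 u1 hx1 hx2
    omega

/-- Uniqueness: a (δ,ν)-tree is determined by its row vector. -/
lemma trees_unique (hδ : IsIncrement ν δ) (hT : IsDNTree ν δ T) (hT' : IsDNTree ν δ T')
    (hrow : ∀ i, i < ν.length → rowN T i = rowN T' i) : T = T' := by
  have key : ∀ y, y ≤ ν.length → ∀ i, i < y → Rw T i = Rw T' i := by
    intro y
    induction y with
    | zero => intro _ i hi; omega
    | succ n ih =>
      intro hy i hi
      rcases Nat.lt_or_ge i n with h | h
      · exact ih (by omega) i h
      · have hin : i = n := by omega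
        subst hin
        have hAlw : Alw ν δ T i = Alw ν δ T' i := by
          ext x
          simp only [Alw, Set.mem_setOf_eq]
          constructor <;> rintro ⟨ha, hb, hc⟩ <;> refine ⟨ha, hb, fun p hp hpy => ?_⟩
          · refine hc p ?_ hpy
            have : p.1 ∈ Rw T p.2 := by
              rw [ih (by omega) p.2 hpy]
              exact hp
            exact this
          · refine hc p ?_ hpy
            have : p.1 ∈ Rw T' p.2 := by
              rw [← ih (by omega) p.2 hpy]
              exact hp
            exact this
        apply upclosed_eq (Alw_finite (ν := ν) (δ := δ) (T := T) i)
          (rows_subset_Alw hδ hT.2.1 hT.1 i)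
          (hAlw ▸ rows_subset_Alw hδ hT'.2.1 hT'.1 i)
          (fun x hx s hs h => up_closed hδ hT hx hs h)
          (fun x hx s hs h => up_closed hδ hT' (hAlw ▸ hx) hs h)
        rw [← rowN_eq, ← rowN_eq]
        exact hrow i (by omega)
  ext p
  constructor
  · intro hp
    have hi := ((mem_Ldn hδ).1 (hT.1 hp)).1
    have : p.1 ∈ Rw T' p.2 := by
      rw [← key ν.length le_rfl p.2 hi]
      exact hp
    exact this
  · intro hp
    have hi := ((mem_Ldn hδ).1 (hT'.1 hp)).1
    have : p.1 ∈ Rw T p.2 := by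
      rw [key ν.length le_rfl p.2 hi]
      exact hp
    exact this

/-- Any compatible subset extends to a maximal one. -/
lemma exists_maximal (hδ : IsIncrement ν δ) (hsub : T ⊆ Ldn ν δ)
    (hc : PairwiseCompat (nuCheck ν δ) T) : ∃ T', T ⊆ T' ∧ IsDNTree ν δ T' := by
  have key : ∀ k U, U ⊆ Ldn ν δ → PairwiseCompat (nuCheck ν δ) U →
      (Ldn ν δ).ncard ≤ U.ncard + k → ∃ V, U ⊆ V ∧ IsDNTree ν δ V := by
    intro k
    induction k with
    | zero =>
      intro U hU1 hU2 hk
      have : U = Ldn ν δ := Set.eq_of_subset_of_ncard_le hU1 (by omega) (Ldn_finite hδ)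
      refine ⟨U, le_refl U, hU1, hU2, fun T' h1 h2 _ => ?_⟩
      exact Set.Subset.antisymm (this ▸ h2) h1
    | succ k ih =>
      intro U hU1 hU2 hk
      by_cases hmax : ∀ T', U ⊆ T' → T' ⊆ Ldn ν δ → PairwiseCompat (nuCheck ν δ) T' → T' = U
      · exact ⟨U, le_refl U, hU1, hU2, hmax⟩
      · push_neg at hmax
        obtain ⟨V, hV1, hV2, hV3, hV4⟩ := hmax
        have hVlt : U.ncard < V.ncard :=
          Set.ncard_lt_ncard (Set.ssubset_iff_subset_ne.2 ⟨hV1, fun h => hV4 h.symm⟩)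
            ((Ldn_finite hδ).subset hV2)
        obtain ⟨W, hW1, hW2⟩ := ih V hV2 hV3 (by omega)
        exact ⟨W, hV1.trans hW1, hW2⟩
  exact key (Ldn ν δ).ncard T hsub hc (by omega)
/-! ### Construction of a tree from a valid row vector -/

open Finset in
/-- The largest `k` elements of a finite set of naturals. -/
def topK (k : ℕ) (F : Finset ℕ) : Finset ℕ :=
  F.filter (fun x => (F.filter (fun z => x < z)).card < k)

lemma topK_subset (k : ℕ) (F : Finset ℕ) : topK k F ⊆ F := Finset.filter_subset _ _

lemma topK_upclosed {k : ℕ} {F : Finset ℕ} {x t : ℕ} (hx : x ∈ F) (ht : t ∈ topK k F)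
    (h : t < x) : x ∈ topK k F := by
  rw [topK, Finset.mem_filter] at ht ⊢
  refine ⟨hx, lt_of_le_of_lt (Finset.card_le_card ?_) ht.2⟩
  intro z hz
  rw [Finset.mem_filter] at hz ⊢
  exact ⟨hz.1, by omega⟩

lemma topK_card (k : ℕ) (F : Finset ℕ) : (topK k F).card = min k F.card := by
  classical
  set g : ℕ → ℕ := fun x => (F.filter (fun z => x < z)).card with hg
  have hanti : ∀ x ∈ F, ∀ y ∈ F, x < y → g y < g x := by
    intro x hx y hy hxy
    apply Finset.card_lt_card
    rw [Finset.ssubset_iff_of_subset]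
    · exact ⟨y, Finset.mem_filter.2 ⟨hy, hxy⟩, fun hmem => by
        have := (Finset.mem_filter.1 hmem).2
        omega⟩
    · intro z hz
      rw [Finset.mem_filter] at hz ⊢
      exact ⟨hz.1, by omega⟩
  have hinj : Set.InjOn g F := by
    intro x hx y hy hxy
    rcases Nat.lt_trichotomy x y with h | h | h
    · have := hanti x hx y hy h; omega
    · exact h
    · have := hanti y hy x hx h; omega
  have hlt : ∀ x ∈ F, g x < F.card := by
    intro x hx
    have : F.filter (fun z => x < z) ⊆ F.erase x := by
      intro z hz
      rw [Finset.mem_filter] at hz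
      exact Finset.mem_erase.2 ⟨by omega, hz.1⟩
    calc g x ≤ (F.erase x).card := Finset.card_le_card this
      _ < F.card := Finset.card_erase_lt_of_mem hx
  have himg : F.image g = Finset.range F.card := by
    apply Finset.eq_of_subset_of_card_le
    · intro v hv
      obtain ⟨x, hx, rfl⟩ := Finset.mem_image.1 hv
      exact Finset.mem_range.2 (hlt x hx)
    · rw [Finset.card_range, Finset.card_image_of_injOn hinj]
  have himg2 : (topK k F).image g = Finset.range F.card ∩ Finset.range k := by
    rw [← himg]
    ext v
    simp only [Finset.mem_image, Finset.mem_inter, Finset.mem_range, topK, Finset.mem_filter]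
    constructor
    · rintro ⟨x, ⟨hx, hxk⟩, rfl⟩
      exact ⟨⟨x, hx, rfl⟩, hxk⟩
    · rintro ⟨⟨x, hx, rfl⟩, hvk⟩
      exact ⟨x, ⟨hx, hvk⟩, rfl⟩
  have h1 : (topK k F).card = ((topK k F).image g).card :=
    (Finset.card_image_of_injOn (hinj.mono (topK_subset k F))).symm
  have hri : Finset.range F.card ∩ Finset.range k = Finset.range (min F.card k) := by
    ext x
    simp [Nat.lt_min]
  rw [h1, himg2, hri, Finset.card_range]
  omega

lemma topK_nonempty {k : ℕ} {F : Finset ℕ} (hk : 1 ≤ k) (hF : F.Nonempty) :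
    (topK k F).Nonempty := by
  rw [← Finset.card_pos, topK_card]
  have := Finset.card_pos.2 hF
  omega

lemma topK_all {k : ℕ} {F : Finset ℕ} (h : F.card ≤ k) : topK k F = F := by
  apply Finset.Subset.antisymm (topK_subset k F)
  intro x hx
  rw [topK, Finset.mem_filter]
  refine ⟨hx, ?_⟩
  have hs : F.filter (fun z => x < z) ⊆ F.erase x := by
    intro z hz
    rw [Finset.mem_filter] at hz
    exact Finset.mem_erase.2 ⟨by omega, hz.1⟩
  have h2 := Finset.card_le_card hs
  have h3 := Finset.card_erase_lt_of_mem hx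
  omega

variable (ν δ) in
/-- Finset version of the allowed set, relative to a list of earlier rows. -/
def AlF (L : List (Finset ℕ)) (y : ℕ) : Finset ℕ :=
  (Finset.Icc (Av ν δ y) (Bv ν δ y)).filter
    (fun x => ∀ i < y, ∀ z ∈ L.getD i ∅, x ≤ z ∨ Bv ν δ i < x)

variable (ν δ) in
/-- Rows `0, …, y-1` of the constructed tree with prescribed row counts `k`. -/
def rowsL (k : ℕ → ℕ) : ℕ → List (Finset ℕ)
  | 0 => []
  | y + 1 => rowsL k y ++ [topK (k y) (AlF ν δ (rowsL k y) y)]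

variable (ν δ) in
/-- Row `y` of the constructed tree. -/
def rowF (k : ℕ → ℕ) (y : ℕ) : Finset ℕ := (rowsL ν δ k (y + 1)).getD y ∅

lemma rowsL_length (k : ℕ → ℕ) (y : ℕ) : (rowsL ν δ k y).length = y := by
  induction y with
  | zero => rfl
  | succ n ih => rw [rowsL, List.length_append, ih]; rfl

lemma rowF_eq (k : ℕ → ℕ) (y : ℕ) :
    rowF ν δ k y = topK (k y) (AlF ν δ (rowsL ν δ k y) y) := by
  rw [rowF, rowsL, List.getD_append_right _ _ _ _ (by rw [rowsL_length]),
    rowsL_length]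
  simp

lemma rowsL_getD (k : ℕ → ℕ) {i y : ℕ} (h : i < y) :
    (rowsL ν δ k y).getD i ∅ = rowF ν δ k i := by
  induction y with
  | zero => omega
  | succ n ih =>
    rcases Nat.lt_or_ge i n with h2 | h2
    · rw [rowsL, List.getD_append _ _ _ _ (by rw [rowsL_length]; omega), ih h2]
    · have : i = n := by omega
      subst this
      rfl

variable (ν δ) in
/-- The constructed candidate tree. -/
def Tr (k : ℕ → ℕ) : Set (ℕ × ℕ) := {p | p.2 < ν.length ∧ p.1 ∈ rowF ν δ k p.2}

lemma Rw_Tr (k : ℕ → ℕ) {y : ℕ} (hy : y < ν.length) :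
    Rw (Tr ν δ k) y = ↑(rowF ν δ k y) := by
  ext x
  simp only [Rw, Tr, Set.mem_setOf_eq, Finset.coe_sort_coe, Finset.mem_coe]
  exact ⟨fun h => h.2, fun h => ⟨hy, h⟩⟩

lemma AlF_coe (k : ℕ → ℕ) {y : ℕ} (hy : y ≤ ν.length) :
    ↑(AlF ν δ (rowsL ν δ k y) y) = Alw ν δ (Tr ν δ k) y := by
  ext x
  simp only [AlF, Finset.coe_filter, Set.mem_setOf_eq, Finset.mem_Icc, Alw]
  constructor
  · rintro ⟨⟨h1, h2⟩, h3⟩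
    refine ⟨h1, h2, fun p hp hpy => ?_⟩
    have := h3 p.2 hpy p.1
    rw [rowsL_getD k hpy] at this
    exact this hp.2
  · rintro ⟨h1, h2, h3⟩
    refine ⟨⟨h1, h2⟩, fun i hi z hz => ?_⟩
    rw [rowsL_getD k hi] at hz
    exact h3 (z, i) ⟨by omega, hz⟩ hi

lemma Tr_subset (hδ : IsIncrement ν δ) (k : ℕ → ℕ) : Tr ν δ k ⊆ Ldn ν δ := by
  rintro p ⟨h1, h2⟩
  rw [rowF_eq] at h2
  have h3 := topK_subset _ _ h2
  rw [AlF, Finset.mem_filter, Finset.mem_Icc] at h3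
  exact (mem_Ldn hδ).2 ⟨h1, h3.1.1, h3.1.2⟩

lemma Tr_compat (hδ : IsIncrement ν δ) (k : ℕ → ℕ) :
    PairwiseCompat (nuCheck ν δ) (Tr ν δ k) := by
  have key : ∀ p ∈ Tr ν δ k, ∀ q ∈ Tr ν δ k, p.2 < q.2 → ¬(p.1 < q.1 ∧ q.1 ≤ Bv ν δ p.2) := by
    rintro p hp q ⟨hq1, hq2⟩ hlt
    rw [rowF_eq] at hq2
    have h3 := topK_subset _ _ hq2
    have h4 : (q.1 : ℕ) ∈ Alw ν δ (Tr ν δ k) q.2 := by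
      rw [← AlF_coe k (le_of_lt hq1)]
      exact h3
    have := h4.2.2 p hp hlt
    omega
  intro p hp q hq
  rcases Nat.lt_trichotomy p.2 q.2 with h | h | h
  · rw [incomp_iff hδ h ((mem_Ldn hδ).1 (Tr_subset hδ k hp)).1]
    exact key p hp q hq h
  · exact not_incomp_same h
  · rw [incomp_comm, incomp_iff hδ h ((mem_Ldn hδ).1 (Tr_subset hδ k hq)).1]
    exact key q hq p hp h

/-- The cardinality bookkeeping for the construction. -/
lemma build (hδ : IsIncrement ν δ) {k : ℕ → ℕ} (hk1 : ∀ y < ν.length, 1 ≤ k y)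
    (hk2 : ∀ y < ν.length, (∑ i ∈ Finset.range (y + 1), k i) ≤ Sv ν (y + 1) + 1 + y) :
    ∀ y, y < ν.length →
      (AlF ν δ (rowsL ν δ k y) y).card + ∑ i ∈ Finset.range y, k i = Sv ν (y + 1) + 1 + y ∧
      (rowF ν δ k y).card = k y := by
  intro y
  induction y with
  | zero =>
    intro hy
    have hc : (AlF ν δ (rowsL ν δ k 0) 0).card = ν.getD 0 0 + 1 := by
      have := alw_zero_card (T := Tr ν δ k) hδ
      rw [← AlF_coe k (by omega)] at this
      rw [← Set.ncard_coe_finset]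
      exact this
    have hS : Sv ν 1 = ν.getD 0 0 := by
      rw [Sv_succ]; simp [Sv]
    constructor
    · simp [hc, hS]
    · rw [rowF_eq, topK_card]
      have h6 := hk2 0 hy
      rw [Finset.sum_range_one] at h6
      have hb : Sv ν (0 + 1) = Sv ν 1 := rfl
      omega
  | succ n ih =>
    intro hy
    have hn : n < ν.length := by omega
    obtain ⟨ih1, ih2⟩ := ih hn
    have hAcard : ∀ j, j ≤ ν.length →
        (AlF ν δ (rowsL ν δ k j) j).card = (Alw ν δ (Tr ν δ k) j).ncard := by
      intro j hj
      rw [← AlF_coe k hj, Set.ncard_coe_finset]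
    have hrec := alw_card hδ (Tr_subset hδ k)
      (by
        rw [Rw_Tr k hn, rowF_eq, ← AlF_coe k (le_of_lt hn)]
        exact_mod_cast fun x hx => topK_subset _ _ hx)
      (by
        intro x hx x' hx' hlt
        rw [Rw_Tr k hn, rowF_eq] at hx' ⊢
        rw [← AlF_coe k (le_of_lt hn)] at hx
        exact topK_upclosed hx hx' hlt)
      (by
        rw [Rw_Tr k hn, rowF_eq]
        have hne : (AlF ν δ (rowsL ν δ k n) n).Nonempty := by
          rw [← Finset.card_pos]
          have := hk2 n hn
          rw [Finset.sum_range_succ] at this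
          have := hk1 n hn
          omega
        exact_mod_cast topK_nonempty (hk1 n hn) hne)
    rw [hAcard n (le_of_lt hn)] at ih1
    rw [Rw_Tr k hn, Set.ncard_coe_finset, ih2] at hrec
    have hS := Sv_succ ν (n + 1)
    have hAn1 := hAcard (n + 1) (by omega)
    constructor
    · rw [hAn1, Finset.sum_range_succ]
      omega
    · rw [rowF_eq, topK_card, hAn1]
      have h5 := hk2 (n + 1) hy
      rw [Finset.sum_range_succ, Finset.sum_range_succ] at h5
      omega

lemma Tr_ncard (hδ : IsIncrement ν δ) {k : ℕ → ℕ} (hk1 : ∀ y < ν.length, 1 ≤ k y)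
    (hk2 : ∀ y < ν.length, (∑ i ∈ Finset.range (y + 1), k i) ≤ Sv ν (y + 1) + 1 + y) :
    (Tr ν δ k).ncard = ∑ i ∈ Finset.range ν.length, k i := by
  rw [ncard_eq_sum hδ (Tr_subset hδ k)]
  refine Finset.sum_congr rfl fun y hy => ?_
  rw [Rw_Tr k (Finset.mem_range.1 hy), Set.ncard_coe_finset]
  exact (build hδ hk1 hk2 y (Finset.mem_range.1 hy)).2

/-- Existence: a valid row-count vector is realized by a (δ,ν)-tree. -/
lemma tree_exists (hδ : IsIncrement ν δ) (hν : ν ≠ []) {k : ℕ → ℕ}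
    (hk1 : ∀ y < ν.length, 1 ≤ k y)
    (hk2 : ∀ y < ν.length, (∑ i ∈ Finset.range (y + 1), k i) ≤ Sv ν (y + 1) + 1 + y)
    (hk3 : (∑ i ∈ Finset.range ν.length, k i) = ν.sum + ν.length) :
    IsDNTree ν δ (Tr ν δ k) ∧ ∀ y < ν.length, rowN (Tr ν δ k) y = k y := by
  obtain ⟨T', hsub, hT'⟩ := exists_maximal hδ (Tr_subset hδ k) (Tr_compat hδ k)
  have h1 : (Tr ν δ k).ncard = ν.sum + ν.length := by
    rw [Tr_ncard hδ hk1 hk2, hk3]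
  have h2 : T'.ncard = ν.sum + ν.length := tree_ncard hδ hν hT'
  have heq : Tr ν δ k = T' :=
    Set.eq_of_subset_of_ncard_le hsub (by omega) (T_finite hδ hT'.1)
  refine ⟨heq ▸ hT', fun y hy => ?_⟩
  rw [rowN_eq, Rw_Tr k hy, Set.ncard_coe_finset]
  exact (build hδ hk1 hk2 y hy).2

end DN12

/-- A (δ,ν)-tree is completely determined by its row vector
`r(T)` (where `r_i + 1` is the number of points at height `i`), and
`(r_0, …, r_n)` is the row vector of some (δ,ν)-tree if and only if
`r_i ≥ 0`, all partial sums satisfy `Σ_{i≤j} r_i ≤ Σ_{i≤j} ν_i`, and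
`Σ r_i = Σ ν_i`. -/
theorem dn_tree_row_vector_characterization (ν δ : List ℕ) (hν : ν ≠ [])
    (hδ : IsIncrement ν δ) :
    (∀ T T', IsDNTree ν δ T → IsDNTree ν δ T' →
      (∀ i, i < ν.length → rowN T i = rowN T' i) → T = T') ∧
    (∀ r : List ℤ, r.length = ν.length →
      ((∃ T, IsDNTree ν δ T ∧
          ∀ i, i < ν.length → (rowN T i : ℤ) = r.getD i 0 + 1) ↔
        ((∀ i, i < ν.length → 0 ≤ r.getD i 0) ∧
         (∀ j, j < ν.length → (r.take (j + 1)).sum ≤ ((ν.take (j + 1)).sum : ℤ)) ∧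
         r.sum = (ν.sum : ℤ)))) := by
  constructor
  · intro T T' hT hT' h
    exact DN12.trees_unique hδ hT hT' h
  · intro r hlen
    have hlen1 : 1 ≤ ν.length := List.length_pos_iff.2 hν
    constructor
    · rintro ⟨T, hT, hr⟩
      have hrowpos : ∀ i, i < ν.length → 1 ≤ rowN T i := by
        intro i hi
        rw [DN12.rowN_eq]
        exact (Set.ncard_pos (DN12.Rw_finite hδ hT.1 i)).2 (DN12.row_nonempty hδ hT hi)
      have hsum_eq : ∀ j, j ≤ ν.length →
          (∑ i ∈ Finset.range j, r.getD i 0)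
            = ((∑ i ∈ Finset.range j, (DN12.Rw T i).ncard : ℕ) : ℤ) - j := by
        intro j hj
        have hcongr : ∀ i ∈ Finset.range j, r.getD i 0 = ((DN12.Rw T i).ncard : ℤ) - 1 := by
          intro i hi
          have hij : i < ν.length := by
            have := Finset.mem_range.1 hi
            omega
          have h2 := hr i hij
          rw [DN12.rowN_eq] at h2
          omega
        rw [Finset.sum_congr rfl hcongr, Finset.sum_sub_distrib, Finset.sum_const,
          Finset.card_range]
        push_cast
        ring
      refine ⟨?_, ?_, ?_⟩
      · intro i hi
        have h1 := hrowpos i hi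
        have h2 := hr i hi
        have h3 : (1 : ℤ) ≤ (rowN T i : ℤ) := by exact_mod_cast h1
        omega
      · intro j hj
        have hs := DN12.row_counts_le hδ hT hj
        rw [DN12.sum_take_getD r (j + 1), DN12.Sv_take ν (j + 1),
          hsum_eq (j + 1) (by omega)]
        have hc : ((∑ i ∈ Finset.range (j + 1), (DN12.Rw T i).ncard : ℕ) : ℤ)
            ≤ (DN12.Sv ν (j + 1) : ℤ) + 1 + j := by exact_mod_cast hs
        omega
      · have ht := DN12.row_counts_total hδ hν hT
        have hR : r.sum = ∑ i ∈ Finset.range ν.length, r.getD i 0 := by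
          conv_lhs => rw [← (List.take_length : r.take r.length = r)]
          rw [DN12.sum_take_getD, hlen]
        rw [hR, hsum_eq ν.length le_rfl, ht]
        push_cast
        ring
    · rintro ⟨h1, h2, h3⟩
      set k : ℕ → ℕ := fun y => (r.getD y 0).toNat + 1 with hk
      have hksum : ∀ j, j ≤ ν.length →
          ((∑ i ∈ Finset.range j, k i : ℕ) : ℤ)
            = (∑ i ∈ Finset.range j, r.getD i 0) + j := by
        intro j hj
        simp only [hk]
        push_cast
        rw [Finset.sum_add_distrib, Finset.sum_const, Finset.card_range]
        have hcongr : ∀ i ∈ Finset.range j, (((r.getD i 0).toNat : ℤ)) = r.getD i 0 := by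
          intro i hi
          have hij : i < ν.length := by
            have := Finset.mem_range.1 hi
            omega
          have := h1 i hij
          omega
        rw [Finset.sum_congr rfl hcongr]
        push_cast
        ring
      have hk1 : ∀ y < ν.length, 1 ≤ k y := fun y _ => by simp [hk]
      have hk2 : ∀ y < ν.length,
          (∑ i ∈ Finset.range (y + 1), k i) ≤ DN12.Sv ν (y + 1) + 1 + y := by
        intro y hy
        have hz := h2 y hy
        rw [DN12.sum_take_getD r (y + 1), DN12.Sv_take ν (y + 1)] at hz
        have hq := hksum (y + 1) (by omega)
        have : ((∑ i ∈ Finset.range (y + 1), k i : ℕ) : ℤ)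
            ≤ ((DN12.Sv ν (y + 1) + 1 + y : ℕ) : ℤ) := by
          push_cast
          push_cast at hq
          omega
        exact_mod_cast this
      have hk3 : (∑ i ∈ Finset.range ν.length, k i) = ν.sum + ν.length := by
        have hR : r.sum = ∑ i ∈ Finset.range ν.length, r.getD i 0 := by
          conv_lhs => rw [← (List.take_length : r.take r.length = r)]
          rw [DN12.sum_take_getD, hlen]
        rw [hR] at h3
        have hq := hksum ν.length le_rfl
        rw [h3] at hq
        have : ((∑ i ∈ Finset.range ν.length, k i : ℕ) : ℤ)
            = ((ν.sum + ν.length : ℕ) : ℤ) := by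
          push_cast
          push_cast at hq
          omega
        exact_mod_cast this
      obtain ⟨hT, hrow⟩ := DN12.tree_exists hδ hν hk1 hk2 hk3
      refine ⟨DN12.Tr ν δ k, hT, fun i hi => ?_⟩
      rw [hrow i hi]
      have := h1 i hi
      simp only [hk]
      push_cast
      omega
end

section
/- Let ν be a lattice path, δ an increment vector for ν, T a (δ,ν)-tree with row vector r(T) = (r_0, …, r_n), and ℓ ≥ 1. The number of left intervals of length ℓ in the rotation poset of (δ,ν)-trees with bottom element T is equal to |{0 ≤ i ≤ n−1 : r_i ≥ ℓ}|. -/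
/-!
A left interval `[T, T']` of length `ℓ` is determined by its row. Its first rotated node has a
node of `T` above it, so by compatibility it is the leftmost node of its row; the next rotated
nodes are the following nodes of that row, and a rotation is determined by its node.
Conversely, if a row `i < n` has at least `ℓ + 1` nodes, maximality of `T` puts a node above the
leftmost one, at some lowest height `b`, and one can rotate successively at the `ℓ` leftmost
nodes, each being moved up to height `b`: compatibility of `T` keeps every rectangle empty.
As `T \ T'` lies in the row of the interval, taking this row is a bijection from the left intervals
onto `{i < n : r_i ≥ ℓ}`.
-/

section Compatibility

variable {ω : List ℕ} {T : Set (ℕ × ℕ)}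

theorem Incomp.symm {p q : ℕ × ℕ} (h : Incomp ω p q) : Incomp ω q p := by
  obtain ⟨h1, h2⟩ := h
  exact ⟨h1.symm, by rwa [max_comm, min_comm]⟩

theorem incomp_irrefl (p : ℕ × ℕ) : ¬ Incomp ω p p := by
  rintro ⟨⟨h, -⟩ | ⟨h, -⟩, -⟩ <;> exact lt_irrefl _ h

theorem PairwiseCompat.corner_notMem_Lpts (hC : PairwiseCompat ω T) {a b : ℕ × ℕ}
    (ha : a ∈ T) (hb : b ∈ T) (h1 : a.1 < b.1) (h2 : a.2 < b.2) : (b.1, a.2) ∉ Lpts ω :=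
  fun h => hC a ha b hb ⟨Or.inl ⟨h1, h2⟩, by rwa [max_eq_right h1.le, min_eq_left h2.le]⟩

theorem PairwiseCompat.fst_le_of_mem_above (hC : PairwiseCompat ω T) {q q' p : ℕ × ℕ}
    (hq : q ∈ Lpts ω) (hq' : q' ∈ T) (hp : p ∈ T) (hrow : q'.2 = q.2) (hcol : p.1 = q.1)
    (hqp : q.2 < p.2) : q.1 ≤ q'.1 := by
  by_contra! h
  exact hC.corner_notMem_Lpts hq' hp (by omega) (by omega) (by rwa [hcol, hrow])

end Compatibility

section Rotation

variable {ω : List ℕ} {T T' : Set (ℕ × ℕ)} {q : ℕ → ℕ × ℕ} {ℓ : ℕ}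

theorem RotationAt.mem_of_mem {q s : ℕ × ℕ} (h : RotationAt ω T q T') (hs : s ∈ T)
    (hsq : s ≠ q) : s ∈ T' := by
  obtain ⟨-, -, -, -, -, -, -, -, -, -, rfl⟩ := h
  exact Or.inr ⟨hs, hsq⟩

theorem RotationAt.mem_of_snd_eq {q s : ℕ × ℕ} (h : RotationAt ω T q T') (hs : s ∈ T')
    (hsq : s.2 = q.2) : s ∈ T ∧ s ≠ q := by
  obtain ⟨p, r, -, -, -, -, hqp, -, -, -, rfl⟩ := h
  rcases hs with rfl | hs
  · exact absurd hsq hqp.ne'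
  · exact hs

theorem RotationAt.fst_le (hTL : T ⊆ Lpts ω) (hC : PairwiseCompat ω T) {q s : ℕ × ℕ}
    (h : RotationAt ω T q T') (hs : s ∈ T) (hrow : s.2 = q.2) : q.1 ≤ s.1 := by
  obtain ⟨p, -, hp, hq, -, hpq, hqp, -⟩ := h
  exact hC.fst_le_of_mem_above (hTL hq) hs hp hrow hpq hqp

theorem RotationAt.unique {q : ℕ × ℕ} {T₁ T₂ : Set (ℕ × ℕ)} (h₁ : RotationAt ω T q T₁)
    (h₂ : RotationAt ω T q T₂) : T₁ = T₂ := by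
  obtain ⟨p₁, r₁, hp₁, -, hr₁, hp₁x, hp₁y, hr₁y, hr₁x, hrect₁, rfl⟩ := h₁
  obtain ⟨p₂, r₂, hp₂, -, hr₂, hp₂x, hp₂y, hr₂y, hr₂x, hrect₂, rfl⟩ := h₂
  have hr : r₁.1 = r₂.1 := by
    rcases lt_trichotomy r₁.1 r₂.1 with h | h | h
    · rcases hrect₂ r₁ hr₁ (by omega) h.le (by omega) (by omega) with rfl | rfl | rfl <;> omega
    · exact h
    · rcases hrect₁ r₂ hr₂ (by omega) h.le (by omega) (by omega) with rfl | rfl | rfl <;> omega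
  have hp : p₁.2 = p₂.2 := by
    rcases lt_trichotomy p₁.2 p₂.2 with h | h | h
    · rcases hrect₂ p₁ hp₁ (by omega) (by omega) (by omega) h.le with rfl | rfl | rfl <;> omega
    · exact h
    · rcases hrect₁ p₂ hp₂ (by omega) (by omega) (by omega) h.le with rfl | rfl | rfl <;> omega
  rw [hr, hp]

variable {c : ℕ → Set (ℕ × ℕ)}

theorem mem_chain_of_mem (hc0 : c 0 = T)
    (hc : ∀ k < ℓ, RotationAt ω (c k) (q k) (c (k + 1))) {s : ℕ × ℕ} (hs : s ∈ T) :
    ∀ k ≤ ℓ, (∀ j < k, s ≠ q j) → s ∈ c k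
  | 0, _, _ => hc0 ▸ hs
  | k + 1, hk, hne => (hc k hk).mem_of_mem
      (mem_chain_of_mem hc0 hc hs k (by omega) fun j hj => hne j (by omega)) (hne k (by omega))

theorem mem_chain_of_snd_eq (hc0 : c 0 = T)
    (hc : ∀ k < ℓ, RotationAt ω (c k) (q k) (c (k + 1))) {s : ℕ × ℕ}
    (hrow : ∀ k < ℓ, (q k).2 = s.2) : ∀ k ≤ ℓ, s ∈ c k → s ∈ T ∧ ∀ j < k, s ≠ q j
  | 0, _, hs => ⟨hc0 ▸ hs, fun _ hj => absurd hj (Nat.not_lt_zero _)⟩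
  | k + 1, hk, hs => by
    obtain ⟨hs, hsk⟩ := (hc k hk).mem_of_snd_eq hs (hrow k hk).symm
    obtain ⟨hsT, hne⟩ := mem_chain_of_snd_eq hc0 hc hrow k (by omega) hs
    refine ⟨hsT, fun j hj => ?_⟩
    rcases Nat.lt_succ_iff_lt_or_eq.mp hj with hj | rfl
    exacts [hne j hj, hsk]

theorem chain_eq_of_rotationAt {c' : ℕ → Set (ℕ × ℕ)} (h0 : c 0 = c' 0)
    (hc : ∀ k < ℓ, RotationAt ω (c k) (q k) (c (k + 1)))
    (hc' : ∀ k < ℓ, RotationAt ω (c' k) (q k) (c' (k + 1))) : ∀ k ≤ ℓ, c k = c' k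
  | 0, _ => h0
  | k + 1, hk => (hc k hk).unique <| by
    rw [chain_eq_of_rotationAt h0 hc hc' k (by omega)]
    exact hc' k hk

end Rotation

section ConsecRow

variable {T : Set (ℕ × ℕ)} {q : ℕ → ℕ × ℕ} {ℓ : ℕ}

theorem ConsecRow.strictMonoOn_fst (h : ConsecRow T q ℓ) :
    StrictMonoOn (fun k => (q k).1) (Set.Iic ℓ) :=
  strictMonoOn_Iic_of_lt_succ fun k hk => by
    rw [Order.succ_eq_add_one]; exact h.2.2.1 k hk

theorem ConsecRow.card_le_rowN (hT : T.Finite) (h : ConsecRow T q ℓ) :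
    ℓ + 1 ≤ rowN T (q 0).2 := by
  have hinj : (Set.Iic ℓ).InjOn q := Set.InjOn.of_comp (g := Prod.fst) h.strictMonoOn_fst.injOn
  calc ℓ + 1 = (q '' Set.Iic ℓ).ncard := by rw [hinj.ncard_image, Set.ncard_Iic_nat]
    _ ≤ rowN T (q 0).2 :=
      Set.ncard_le_ncard (by rintro _ ⟨k, hk, rfl⟩; exact ⟨h.1 k hk, h.2.1 k hk⟩)
        (hT.subset (Set.sep_subset _ _))

theorem ConsecRow.eq_of_apply_zero_eq {q' : ℕ → ℕ × ℕ} (h : ConsecRow T q ℓ)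
    (h' : ConsecRow T q' ℓ) (h0 : q 0 = q' 0) : ∀ k ≤ ℓ, q k = q' k
  | 0, _ => h0
  | k + 1, hk => by
    have ih := h.eq_of_apply_zero_eq h' h0 k (by omega)
    have hrow : (q (k + 1)).2 = (q' 0).2 := by rw [h.2.1 _ hk, h0]
    have hrow' : (q' (k + 1)).2 = (q 0).2 := by rw [h'.2.1 _ hk, h0]
    refine Prod.ext ?_ (hrow.trans (h'.2.1 _ hk).symm)
    rcases lt_trichotomy (q (k + 1)).1 (q' (k + 1)).1 with hlt | heq | hgt
    · exact (h'.2.2.2 k hk _ (h.1 _ hk) hrow (ih ▸ h.2.2.1 k hk) hlt).elim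
    · exact heq
    · exact (h.2.2.2 k hk _ (h'.1 _ hk) hrow' (ih ▸ h'.2.2.1 k hk) hgt).elim

theorem exists_consecRow (hT : T.Finite) {i : ℕ} (h : ℓ + 1 ≤ rowN T i) :
    ∃ q, ConsecRow T q ℓ ∧ (q 0).2 = i ∧ ∀ s ∈ T, s.2 = i → (q 0).1 ≤ s.1 := by
  set P : ℕ → Prop := fun x => (x, i) ∈ T
  have hrow : {p ∈ T | p.2 = i} = (·, i) '' Set.ofPred P := by
    ext ⟨x, y⟩
    simp only [Set.mem_ofPred_eq, Set.mem_image, Prod.mk.injEq]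
    constructor
    · rintro ⟨hx, rfl⟩; exact ⟨x, hx, rfl, rfl⟩
    · rintro ⟨x, hx, rfl, rfl⟩; exact ⟨hx, rfl⟩
  have hP : (Set.ofPred P).Finite :=
    hT.preimage (Set.injOn_of_injective fun x y hxy => (Prod.mk.inj hxy).1)
  have hcard : ℓ < hP.toFinset.card := by
    rw [← Set.ncard_eq_toFinset_card _ hP, ← Set.ncard_image_of_injective _
      (fun x y hxy => (Prod.mk.inj hxy).1 : Function.Injective (·, i)), ← hrow]
    exact h
  refine ⟨fun k => (Nat.nth P k, i),
    ⟨fun k hk => Nat.nth_mem_of_lt_card hP (by omega), fun _ _ => rfl,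
      fun k hk => Nat.nth_lt_nth_of_lt_card hP k.lt_add_one (by omega), ?_⟩, rfl, ?_⟩
  · rintro k - ⟨x, y⟩ hs rfl h1 h2
    exact absurd (Nat.le_nth_of_lt_nth_succ h2 hs) h1.not_ge
  · rintro ⟨x, y⟩ hs rfl
    show Nat.nth P 0 ≤ x
    rw [Nat.nth_zero]
    exact Nat.sInf_le hs

end ConsecRow

section LeftChain

variable {ω : List ℕ} {T : Set (ℕ × ℕ)} {q : ℕ → ℕ × ℕ} {ℓ : ℕ}

theorem image_snd_diff_chain {c : ℕ → Set (ℕ × ℕ)} (hℓ : 1 ≤ ℓ) (hq : ConsecRow T q ℓ)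
    (hc0 : c 0 = T) (hc : ∀ k < ℓ, RotationAt ω (c k) (q k) (c (k + 1))) :
    Prod.snd '' (T \ c ℓ) = {(q 0).2} := by
  have hrow : ∀ k < ℓ, (q k).2 = (q 0).2 := fun k hk => hq.2.1 k hk.le
  ext y
  constructor
  · rintro ⟨s, ⟨hsT, hsc⟩, rfl⟩
    by_contra hy
    exact hsc (mem_chain_of_mem hc0 hc hsT ℓ le_rfl fun j hj he => hy (he ▸ hrow j hj))
  · rintro rfl
    refine ⟨q 0, ⟨hq.1 0 ℓ.zero_le, fun h => ?_⟩, rfl⟩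
    exact (mem_chain_of_snd_eq hc0 hc hrow ℓ le_rfl h).2 0 hℓ rfl

/-- The intermediate sets of the left interval at the row nodes `q 0, q 1, …`; the parameter `b`
is meant to be the height of the lowest node of `T` above `q 0`. -/
def leftChain (T : Set (ℕ × ℕ)) (q : ℕ → ℕ × ℕ) (b : ℕ) : ℕ → Set (ℕ × ℕ)
  | 0 => T
  | k + 1 => insert ((q (k + 1)).1, b) (leftChain T q b k \ {q k})

variable {b : ℕ}

theorem mem_leftChain_of_mem {s : ℕ × ℕ} (hs : s ∈ T) :
    ∀ k, (∀ j < k, s ≠ q j) → s ∈ leftChain T q b k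
  | 0, _ => hs
  | k + 1, hne => Or.inr ⟨mem_leftChain_of_mem hs k fun j hj => hne j (by omega), hne k (by omega)⟩

theorem top_mem_leftChain (hb : ((q 0).1, b) ∈ T) : ∀ k, ((q k).1, b) ∈ leftChain T q b k
  | 0 => hb
  | _ + 1 => Set.mem_insert _ _

theorem mem_leftChain (hq : ConsecRow T q ℓ) {s : ℕ × ℕ} :
    ∀ k ≤ ℓ, s ∈ leftChain T q b k → s ∈ T ∨ (s.2 = b ∧ s.1 ≤ (q k).1)
  | 0, _, hs => Or.inl hs
  | k + 1, hk, hs => by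
    rcases hs with rfl | ⟨hs, -⟩
    · exact Or.inr ⟨rfl, le_rfl⟩
    · exact (mem_leftChain hq k (by omega) hs).imp_right
        fun h => ⟨h.1, h.2.trans (hq.2.2.1 k (by omega)).le⟩

theorem eq_corner_of_mem_leftChain (hTL : T ⊆ Lpts ω) (hC : PairwiseCompat ω T)
    (hq : ConsecRow T q ℓ) (hbmin : ∀ y, ((q 0).1, y) ∈ T → (q 0).2 < y → b ≤ y)
    {k : ℕ} (hk : k < ℓ)
    {s : ℕ × ℕ} (hs : s ∈ leftChain T q b k) (h1 : (q k).1 ≤ s.1) (h2 : s.1 ≤ (q (k + 1)).1)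
    (h3 : (q k).2 ≤ s.2) (h4 : s.2 ≤ b) : s = ((q k).1, b) ∨ s = q k ∨ s = q (k + 1) := by
  have hqk : (q k).2 = (q 0).2 := hq.2.1 k hk.le
  have hqk' : (q (k + 1)).2 = (q 0).2 := hq.2.1 (k + 1) hk
  rcases mem_leftChain hq k hk.le hs with hsT | ⟨hsb, hsx⟩
  swap
  · exact Or.inl (Prod.ext (by omega) hsb)
  rcases h3.eq_or_lt with h3 | h3
  · right
    rcases h1.eq_or_lt with h1 | h1
    · exact Or.inl (Prod.ext h1.symm h3.symm)
    rcases h2.eq_or_lt with h2 | h2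
    · exact Or.inr (Prod.ext h2 (by omega))
    exact (hq.2.2.2 k hk s hsT (by omega) h1 h2).elim
  rcases h1.eq_or_lt with h1 | h1
  · left
    rcases Nat.eq_zero_or_pos k with rfl | hk0
    · exact Prod.ext h1.symm (le_antisymm h4 (hbmin s.2 (by rw [h1]; exact hsT) h3))
    · have := hC.fst_le_of_mem_above (hTL (hq.1 k hk.le)) (hq.1 0 ℓ.zero_le) hsT hqk.symm
        h1.symm h3
      exact absurd (hq.strictMonoOn_fst (Set.mem_Iic.2 ℓ.zero_le) (Set.mem_Iic.2 hk.le) hk0)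
        this.not_gt
  · -- `s` would be strictly northeast of `q k`, inside the Ferrers shape
    have hcorner : (s.1, (q k).2) ∈ Lpts ω := by
      obtain ⟨hy, hx⟩ := hTL (hq.1 (k + 1) hk)
      exact ⟨by rw [hqk, ← hqk']; exact hy, by rw [hqk, ← hqk']; exact h2.trans hx⟩
    exact (hC.corner_notMem_Lpts (hq.1 k hk.le) hsT h1 h3 hcorner).elim

theorem rotationAt_leftChain (hTL : T ⊆ Lpts ω) (hC : PairwiseCompat ω T)
    (hq : ConsecRow T q ℓ) (hbT : ((q 0).1, b) ∈ T) (hb : (q 0).2 < b)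
    (hbmin : ∀ y, ((q 0).1, y) ∈ T → (q 0).2 < y → b ≤ y) {k : ℕ} (hk : k < ℓ) :
    RotationAt ω (leftChain T q b k) (q k) (leftChain T q b (k + 1)) := by
  have hne : ∀ m ≤ ℓ, ∀ j < m, q m ≠ q j := fun m hm j hj he =>
    (hq.strictMonoOn_fst (Set.mem_Iic.2 (hj.le.trans hm)) (Set.mem_Iic.2 hm) hj).ne'
      (congrArg Prod.fst he)
  refine ⟨((q k).1, b), q (k + 1), top_mem_leftChain hbT k,
    mem_leftChain_of_mem (hq.1 k hk.le) k (hne k hk.le),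
    mem_leftChain_of_mem (hq.1 (k + 1) hk) k (fun j hj => hne (k + 1) hk j (by omega)), rfl,
    by rw [hq.2.1 k hk.le]; exact hb, by rw [hq.2.1 k hk.le, hq.2.1 (k + 1) hk],
    hq.2.2.1 k hk, fun s hs => eq_corner_of_mem_leftChain hTL hC hq hbmin hk hs, rfl⟩

end LeftChain

section DeltaNuTrees

variable {ν δ : List ℕ} {T : Set (ℕ × ℕ)}

theorem Ldn_subset_Lpts (hδ : IsIncrement ν δ) : Ldn ν δ ⊆ Lpts (nuCheck ν δ) :=
  fun _ ⟨hy, _, hx⟩ => ⟨by simp only [nuCheck, List.length_cons]; have := hδ.1; omega, hx⟩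

theorem Ldn_finite (ν δ : List ℕ) : (Ldn ν δ).Finite := by
  refine ((Set.finite_Iic (nuCheck ν δ).sum).prod (Set.finite_Iio ν.length)).subset ?_
  rintro ⟨x, y⟩ ⟨hy, -, hx⟩
  have := List.sum_take_add_sum_drop (nuCheck ν δ) (y + 1)
  exact ⟨by simp only [Set.mem_Iic] at hx ⊢; omega, hy⟩

theorem Ldn_succ_snd (hδ : IsIncrement ν δ) {x y : ℕ} (h : (x, y) ∈ Ldn ν δ)
    (hy : y + 1 < ν.length) : (x, y + 1) ∈ Ldn ν δ := by
  obtain ⟨-, hlow, hup⟩ := h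
  have hyδ : y < δ.length := by have := hδ.1; omega
  have hν := List.sum_take_succ ν (y + 1) hy
  have hδy : (δ.drop y).sum = δ[y] + (δ.drop (y + 1)).sum := by
    rw [List.drop_eq_getElem_cons hyδ, List.sum_cons]
  have hle : δ[y] ≤ ν[y + 1] := by
    simpa only [List.getD_eq_getElem _ _ hyδ, List.getD_eq_getElem _ _ hy] using hδ.2 y hyδ
  exact ⟨hy, by simp only at hlow ⊢; omega, hup.trans (List.monotone_sum_take _ (by omega))⟩

theorem Ldn_of_snd_le (hδ : IsIncrement ν δ) {x y j : ℕ} (h : (x, y) ∈ Ldn ν δ) (hyj : y ≤ j)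
    (hj : j < ν.length) : (x, j) ∈ Ldn ν δ := by
  induction j, hyj using Nat.le_induction with
  | base => exact h
  | succ j _ ih => exact Ldn_succ_snd hδ (ih (by omega)) hj

theorem IsDNTree.finite (hT : IsDNTree ν δ T) : T.Finite := (Ldn_finite ν δ).subset hT.1

theorem IsDNTree.exists_incomp (hT : IsDNTree ν δ T) {z : ℕ × ℕ} (hz : z ∈ Ldn ν δ)
    (hzT : z ∉ T) : ∃ t ∈ T, Incomp (nuCheck ν δ) z t := by
  by_contra! hcompat
  refine hzT (hT.2.2 (insert z T) (Set.subset_insert _ _) (Set.insert_subset hz hT.1) ?_ ▸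
    Set.mem_insert z T)
  rintro a (rfl | ha) b (rfl | hb)
  · exact incomp_irrefl _
  · exact hcompat b hb
  · exact fun h => hcompat a ha h.symm
  · exact hT.2.1 a ha b hb

theorem IsDNTree.exists_above (hδ : IsIncrement ν δ) (hT : IsDNTree ν δ T) {q : ℕ × ℕ}
    (hq : q ∈ T) (hqn : q.2 + 1 < ν.length) (hleft : ∀ s ∈ T, s.2 = q.2 → q.1 ≤ s.1) :
    ∃ p ∈ T, p.1 = q.1 ∧ q.2 < p.2 := by
  by_contra! hno
  -- the lowest node northwest of `q`, or the top row if there is none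
  set Y : Set ℕ := insert (ν.length - 1) (Prod.snd '' {t ∈ T | t.1 < q.1 ∧ q.2 < t.2})
  have hY : sInf Y ∈ Y := Nat.sInf_mem (Set.insert_nonempty _ _)
  have hqm : q.2 < sInf Y ∧ sInf Y < ν.length := by
    rcases hY with h | ⟨t, ⟨htT, -, ht⟩, h⟩
    · omega
    · exact ⟨h ▸ ht, h ▸ (hT.1 htT).1⟩
  have hz : (q.1, sInf Y) ∈ Ldn ν δ := Ldn_of_snd_le hδ (hT.1 hq) hqm.1.le hqm.2
  have hzT : (q.1, sInf Y) ∉ T := fun h => (hno _ h rfl).not_gt hqm.1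
  obtain ⟨t, htT, ⟨⟨h1, h2⟩ | ⟨h1, h2⟩, hcorner⟩⟩ := hT.exists_incomp hz hzT
  · rw [max_eq_right h1.le, min_eq_left h2.le] at hcorner
    rcases hY with hm | ⟨t', ⟨ht'T, ht'1, -⟩, ht'⟩
    · have := (hT.1 htT).1
      simp only at h2
      omega
    · exact hT.2.1.corner_notMem_Lpts ht'T htT (by simp only at h1; omega) (by omega)
        (by rw [ht']; exact hcorner)
  · rw [max_eq_left h1.le, min_eq_right h2.le] at hcorner
    rcases lt_trichotomy t.2 q.2 with h | h | h
    · exact hT.2.1.corner_notMem_Lpts htT hq h1 h hcorner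
    · exact absurd (hleft t htT h) h1.not_ge
    · exact (Nat.sInf_le (Or.inr ⟨t, ⟨htT, h1, h⟩, rfl⟩)).not_gt h2

end DeltaNuTrees

section LeftIntervals

variable {ν δ : List ℕ} {T T' : Set (ℕ × ℕ)} {ℓ : ℕ}

theorem IsLeftDNItv.exists_row (h : IsLeftDNItv ν δ T T' ℓ) :
    ∃ i, Prod.snd '' (T \ T') = {i} ∧ i + 1 < ν.length ∧ ℓ + 1 ≤ rowN T i := by
  obtain ⟨hT, hℓ, q, hq, c, hc0, rfl, hc⟩ := h
  obtain ⟨p, -, hp, -, -, -, hqp, -⟩ := hc 0 hℓ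
  rw [hc0] at hp
  exact ⟨(q 0).2, image_snd_diff_chain hℓ hq hc0 hc, by have := (hT.1 hp).1; omega,
    hq.card_le_rowN hT.finite⟩

theorem IsLeftDNItv.eq_of_image_snd_diff_eq (hδ : IsIncrement ν δ) {T₁ T₂ : Set (ℕ × ℕ)}
    (h₁ : IsLeftDNItv ν δ T T₁ ℓ) (h₂ : IsLeftDNItv ν δ T T₂ ℓ)
    (he : Prod.snd '' (T \ T₁) = Prod.snd '' (T \ T₂)) : T₁ = T₂ := by
  obtain ⟨hT, hℓ, q₁, hq₁, c₁, hc₁0, rfl, hc₁⟩ := h₁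
  obtain ⟨-, -, q₂, hq₂, c₂, hc₂0, rfl, hc₂⟩ := h₂
  rw [image_snd_diff_chain hℓ hq₁ hc₁0 hc₁, image_snd_diff_chain hℓ hq₂ hc₂0 hc₂,
    Set.singleton_eq_singleton_iff] at he
  have hTL : T ⊆ Lpts (nuCheck ν δ) := hT.1.trans (Ldn_subset_Lpts hδ)
  -- both first rotations happen at the leftmost node of the row
  have hq0 : q₁ 0 = q₂ 0 := by
    have h₁ := hc₁ 0 hℓ
    have h₂ := hc₂ 0 hℓ
    rw [hc₁0] at h₁
    rw [hc₂0] at h₂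
    exact Prod.ext (le_antisymm (h₁.fst_le hTL hT.2.1 (hq₂.1 0 ℓ.zero_le) he.symm)
      (h₂.fst_le hTL hT.2.1 (hq₁.1 0 ℓ.zero_le) he)) he
  have hq := hq₁.eq_of_apply_zero_eq hq₂ hq0
  exact chain_eq_of_rotationAt (hc₁0.trans hc₂0.symm) hc₁
    (fun k hk => hq k hk.le ▸ hc₂ k hk) ℓ le_rfl

theorem exists_isLeftDNItv (hδ : IsIncrement ν δ) (hT : IsDNTree ν δ T) (hℓ : 1 ≤ ℓ) {i : ℕ}
    (hi : i + 1 < ν.length) (hrow : ℓ + 1 ≤ rowN T i) :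
    ∃ T', IsLeftDNItv ν δ T T' ℓ ∧ Prod.snd '' (T \ T') = {i} := by
  obtain ⟨q, hq, rfl, hleft⟩ := exists_consecRow hT.finite hrow
  obtain ⟨p, hpT, hpx, hpy⟩ := hT.exists_above hδ (hq.1 0 ℓ.zero_le) hi hleft
  set B : Set ℕ := {y | ((q 0).1, y) ∈ T ∧ (q 0).2 < y}
  have hB : sInf B ∈ B := Nat.sInf_mem ⟨p.2, by rw [← hpx]; exact hpT, hpy⟩
  have hc := fun k (hk : k < ℓ) => rotationAt_leftChain (hT.1.trans (Ldn_subset_Lpts hδ))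
    hT.2.1 hq hB.1 hB.2 (fun y hy hqy => Nat.sInf_le ⟨hy, hqy⟩) hk
  exact ⟨leftChain T q (sInf B) ℓ, ⟨hT, hℓ, q, hq, _, rfl, rfl, hc⟩,
    image_snd_diff_chain hℓ hq rfl hc⟩

end LeftIntervals

theorem dn_left_interval_count_general (ν δ : List ℕ) (hδ : IsIncrement ν δ)
    (T : Set (ℕ × ℕ)) (hT : IsDNTree ν δ T)
    (r : List ℕ)
    (hrow : ∀ i, i < ν.length → rowN T i = r.getD i 0 + 1)
    (ℓ : ℕ) (hℓ : 1 ≤ ℓ) :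
    {T' : Set (ℕ × ℕ) | IsLeftDNItv ν δ T T' ℓ}.ncard =
      ((Finset.range (ν.length - 1)).filter (fun i => ℓ ≤ r.getD i 0)).card := by
  set S := {T' : Set (ℕ × ℕ) | IsLeftDNItv ν δ T T' ℓ}
  let row : Set (ℕ × ℕ) → ℕ := fun T' => sInf (Prod.snd '' (T \ T'))
  have hinj : S.InjOn row := by
    intro T₁ h₁ T₂ h₂ he
    obtain ⟨i₁, hi₁, -⟩ := h₁.exists_row
    obtain ⟨i₂, hi₂, -⟩ := h₂.exists_row
    simp only [row, hi₁, hi₂, csInf_singleton] at he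
    exact h₁.eq_of_image_snd_diff_eq hδ h₂ (by rw [hi₁, hi₂, he])
  have himg : row '' S = ↑((Finset.range (ν.length - 1)).filter (fun i => ℓ ≤ r.getD i 0)) := by
    ext i
    simp only [Set.mem_image, Finset.coe_filter, Finset.mem_range, Set.mem_ofPred_eq]
    constructor
    · rintro ⟨T', h, rfl⟩
      obtain ⟨i, hi, hin, hcard⟩ := h.exists_row
      rw [hrow i (by omega)] at hcard
      simp only [row, hi, csInf_singleton]
      omega
    · rintro ⟨hin, hri⟩
      obtain ⟨T', h, hi⟩ := exists_isLeftDNItv hδ hT hℓ (i := i) (by omega)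
        (by rw [hrow i (by omega)]; omega)
      exact ⟨T', h, by simp only [row, hi, csInf_singleton]⟩
  rw [← Set.ncard_coe_finset, ← himg, hinj.ncard_image]

/-- Let `T` be a (δ,ν)-tree with row vector
`r(T) = (r_0, …, r_n)`.  The number of left intervals of length `ℓ ≥ 1` with
bottom element `T` in the rotation poset of (δ,ν)-trees equals
`|{0 ≤ i ≤ n−1 : r_i ≥ ℓ}|`. -/
theorem dn_left_interval_count (ν δ : List ℕ) (hν : ν ≠ []) (hδ : IsIncrement ν δ)
    (T : Set (ℕ × ℕ)) (hT : IsDNTree ν δ T)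
    (r : List ℕ) (hr : r.length = ν.length)
    (hrow : ∀ i, i < ν.length → rowN T i = r.getD i 0 + 1)
    (ℓ : ℕ) (hℓ : 1 ≤ ℓ) :
    {T' : Set (ℕ × ℕ) | IsLeftDNItv ν δ T T' ℓ}.ncard =
      ((Finset.range (ν.length - 1)).filter (fun i => ℓ ≤ r.getD i 0)).card :=
  dn_left_interval_count_general ν δ hδ T hT r hrow ℓ hℓ
end

section
/- Let ν be a lattice path, δ an increment vector for ν, T a (δ,ν)-tree with reduced column vector c̄_δ(T) = (c̄_0, …, c̄_{m−1}), and ℓ ≥ 1. The number of right intervals of length ℓ in the rotation poset of (δ,ν)-trees with top element T is equal to |{0 ≤ i ≤ m−1 : c̄_i ≥ ℓ}|. -/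
/-!
A right interval `[B, T]` of length `ℓ` rotates `B` at consecutive nodes `(x, Y 0), …, (x, Y (ℓ-1))`
of a column. The `i`-th rotation pairs `(x, Y i)` with `(x', Y i)`, where `(x', Y 0)` is the nearest
node of `B` to the right of `(x, Y 0)`, so the node `(x, Y i)` moves to `(x', Y (i+1))`. Seen from
`T`, the nodes `(x', Y 0), …, (x', Y ℓ)` are the top `ℓ + 1` nodes of column `x'`, they are
relevant, and `(x, Y ℓ)` is the nearest node to the left of the top one. Conversely, every column
of `T` with at least `ℓ + 1` relevant nodes determines such data, and undoing the rotations yields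
a (δ,ν)-tree: every point outside it conflicts with one of its nodes. So the right intervals of
length `ℓ` with top `T` are in bijection with the reduced columns holding at least `ℓ + 1` nodes
of `T`, i.e. with the indices `i` such that `c̄_i ≥ ℓ`.
-/

/-- Right end of row `y` of `L_{δ,ν}`, which is also the right end of row `y` of `L_ν̌`. -/
def rowEnd (ν δ : List ℕ) (y : ℕ) : ℕ := ((nuCheck ν δ).take (y + 1)).sum

/-- Left end of row `y` of `L_{δ,ν}`, namely `m - (ν_0 + ⋯ + ν_y + δ_{y+1} + ⋯ + δ_n)`, truncated
at `0`. -/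
def rowStart (ν δ : List ℕ) (y : ℕ) : ℕ := ν.sum - ((ν.take (y + 1)).sum + (δ.drop y).sum)

section RowGeometry

variable {ν δ : List ℕ}

theorem IsIncrement.sum_le (hδ : IsIncrement ν δ) : δ.sum ≤ ν.sum := by
  have hpt : List.Forall₂ (· ≤ ·) δ ν.tail := by
    refine List.forall₂_iff_get.2 ⟨by simp [← hδ.1], fun i h₁ h₂ => ?_⟩
    have := hδ.2 i h₁
    simp only [List.length_tail] at h₂
    rw [List.getD_eq_getElem _ _ h₁, List.getD_eq_getElem _ _ (by omega : i + 1 < ν.length)] at this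
    simpa using this
  exact hpt.sum_le_sum.trans ((List.tail_sublist ν).sum_le_sum fun _ _ => Nat.zero_le _)

theorem IsIncrement.length_nuCheck (hδ : IsIncrement ν δ) : (nuCheck ν δ).length = ν.length := by
  simp [nuCheck, hδ.1]

theorem rowEnd_mono : Monotone (rowEnd ν δ) := fun _ _ h =>
  List.monotone_sum_take _ (by omega)

theorem IsIncrement.rowEnd_le (hδ : IsIncrement ν δ) (y : ℕ) : rowEnd ν δ y ≤ ν.sum := by
  have := hδ.sum_le
  calc rowEnd ν δ y ≤ (nuCheck ν δ).sum :=
        (List.take_sublist _ _).sum_le_sum fun _ _ => Nat.zero_le _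
    _ = ν.sum := by rw [nuCheck, List.sum_cons]; omega

theorem IsIncrement.rowStart_anti (hδ : IsIncrement ν δ) : Antitone (rowStart ν δ) := by
  refine antitone_nat_of_succ_le fun y => Nat.sub_le_sub_left ?_ _
  rcases lt_or_ge y δ.length with hy | hy
  · have hν : y + 1 < ν.length := by have := hδ.1; omega
    rw [List.sum_take_succ _ _ hν, List.drop_eq_getElem_cons hy, List.sum_cons]
    have := hδ.2 y hy
    rw [List.getD_eq_getElem _ _ hy, List.getD_eq_getElem _ _ hν] at this
    omega
  · simp only [List.drop_of_length_le hy, List.drop_of_length_le (Nat.le_succ_of_le hy)]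
    exact Nat.add_le_add_right (List.monotone_sum_take _ (by omega)) _

theorem mem_Ldn {p : ℕ × ℕ} :
    p ∈ Ldn ν δ ↔ p.2 < ν.length ∧ rowStart ν δ p.2 ≤ p.1 ∧ p.1 ≤ rowEnd ν δ p.2 := by
  simp only [Ldn, Set.mem_ofPred_eq, rowStart, rowEnd, Nat.sub_le_iff_le_add, add_assoc]

theorem IsIncrement.mem_Lpts (hδ : IsIncrement ν δ) {p : ℕ × ℕ} :
    p ∈ Lpts (nuCheck ν δ) ↔ p.2 < ν.length ∧ p.1 ≤ rowEnd ν δ p.2 := by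
  simp only [Lpts, Set.mem_ofPred_eq, rowEnd, hδ.length_nuCheck]

theorem IsIncrement.finite_Ldn (hδ : IsIncrement ν δ) : (Ldn ν δ).Finite :=
  ((Set.finite_Iic ν.sum).prod (Set.finite_Iio ν.length)).subset fun p hp => by
    rw [mem_Ldn] at hp
    exact ⟨(hp.2.2.trans (hδ.rowEnd_le _) :), hp.1⟩

theorem relevant_iff {p : ℕ × ℕ} : Relevant ν δ p ↔ p ∈ Ldn ν δ ∧ rowStart ν δ p.2 < p.1 := by
  refine ⟨fun ⟨hp, q, hq, hq2, hq1⟩ => ⟨hp, ?_⟩, fun ⟨hp, h⟩ => ⟨hp, (p.1 - 1, p.2), ?_, rfl, ?_⟩⟩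
  · rw [mem_Ldn, hq2] at hq; omega
  · rw [mem_Ldn] at hp ⊢
    exact ⟨hp.1, show rowStart ν δ p.2 ≤ p.1 - 1 by omega, show p.1 - 1 ≤ rowEnd ν δ p.2 by omega⟩
  · show p.1 - 1 < p.1
    omega

end RowGeometry

def SWIncomp (ν δ : List ℕ) (p q : ℕ × ℕ) : Prop :=
  p.1 < q.1 ∧ p.2 < q.2 ∧ p.2 < ν.length ∧ q.1 ≤ rowEnd ν δ p.2

section Trees

variable {ν δ : List ℕ} {T : Set (ℕ × ℕ)}

theorem IsIncrement.incomp_iff (hδ : IsIncrement ν δ) {p q : ℕ × ℕ} :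
    Incomp (nuCheck ν δ) p q ↔ SWIncomp ν δ p q ∨ SWIncomp ν δ q p := by
  simp only [Incomp, SWIncomp, hδ.mem_Lpts]
  constructor
  · rintro ⟨⟨h1, h2⟩ | ⟨h1, h2⟩, h3, h4⟩
    · rw [max_eq_right h1.le, min_eq_left h2.le] at *; exact .inl ⟨h1, h2, h3, h4⟩
    · rw [max_eq_left h1.le, min_eq_right h2.le] at *; exact .inr ⟨h1, h2, h3, h4⟩
  · rintro (⟨h1, h2, h3, h4⟩ | ⟨h1, h2, h3, h4⟩)
    · rw [max_eq_right h1.le, min_eq_left h2.le]; exact ⟨.inl ⟨h1, h2⟩, h3, h4⟩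
    · rw [max_eq_left h1.le, min_eq_right h2.le]; exact ⟨.inr ⟨h1, h2⟩, h3, h4⟩

theorem IsIncrement.pairwiseCompat_iff (hδ : IsIncrement ν δ) :
    PairwiseCompat (nuCheck ν δ) T ↔ ∀ p ∈ T, ∀ q ∈ T, ¬ SWIncomp ν δ p q := by
  simp only [PairwiseCompat, hδ.incomp_iff, not_or]
  exact ⟨fun h p hp q hq => (h p hp q hq).1, fun h p hp q hq => ⟨h p hp q hq, h q hq p hp⟩⟩

theorem IsDNTree.rowEnd_lt (hδ : IsIncrement ν δ) (hT : IsDNTree ν δ T) {p q : ℕ × ℕ}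
    (hp : p ∈ T) (hq : q ∈ T) (h1 : p.1 < q.1) (h2 : p.2 < q.2) : rowEnd ν δ p.2 < q.1 :=
  not_le.1 fun h4 => hδ.pairwiseCompat_iff.1 hT.2.1 p hp q hq ⟨h1, h2, (mem_Ldn.1 (hT.1 hp)).1, h4⟩

theorem IsDNTree.exists_swIncomp (hδ : IsIncrement ν δ) (hT : IsDNTree ν δ T) {z : ℕ × ℕ}
    (hz : z ∈ Ldn ν δ) (hzT : z ∉ T) : ∃ t ∈ T, SWIncomp ν δ t z ∨ SWIncomp ν δ z t := by
  by_contra! h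
  refine hzT (hT.2.2 (insert z T) (Set.subset_insert _ _) (Set.insert_subset hz hT.1) ?_ ▸
    Set.mem_insert z T)
  rw [hδ.pairwiseCompat_iff]
  rintro p (rfl | hp) q (rfl | hq) hpq
  · exact hpq.1.ne rfl
  · exact (h q hq).2 hpq
  · exact (h p hp).1 hpq
  · exact hδ.pairwiseCompat_iff.1 hT.2.1 p hp q hq hpq

theorem isDNTree_of_forall_exists_swIncomp (hδ : IsIncrement ν δ) (hL : T ⊆ Ldn ν δ)
    (hcompat : ∀ p ∈ T, ∀ q ∈ T, ¬ SWIncomp ν δ p q)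
    (hmax : ∀ z ∈ Ldn ν δ, z ∉ T → ∃ t ∈ T, SWIncomp ν δ t z ∨ SWIncomp ν δ z t) :
    IsDNTree ν δ T := by
  refine ⟨hL, hδ.pairwiseCompat_iff.2 hcompat, fun T' hsub hL' hT' => ?_⟩
  refine (Set.Subset.antisymm (fun z hz => ?_) hsub)
  by_contra hzT
  obtain ⟨t, ht, htz | hzt⟩ := hmax z (hL' hz) hzT
  · exact hδ.pairwiseCompat_iff.1 hT' t (hsub ht) z hz htz
  · exact hδ.pairwiseCompat_iff.1 hT' z hz t (hsub ht) hzt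

end Trees

section ColumnChains

variable {T : Set (ℕ × ℕ)} {q : ℕ → ℕ × ℕ} {ℓ : ℕ}

theorem ConsecCol.of_le (h : ConsecCol T q ℓ) {ℓ' : ℕ} (hℓ' : ℓ' ≤ ℓ) : ConsecCol T q ℓ' :=
  ⟨fun i hi => h.1 i (hi.trans hℓ'), fun i hi => h.2.1 i (hi.trans hℓ'),
    fun i hi => h.2.2.1 i (hi.trans_le hℓ'), fun i hi => h.2.2.2 i (hi.trans_le hℓ')⟩

theorem ConsecCol.strictMonoOn (h : ConsecCol T q ℓ) :
    StrictMonoOn (fun i => (q i).2) (Set.Iic ℓ) :=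
  strictMonoOn_Iic_of_lt_succ fun m hm => h.2.2.1 m hm

theorem ConsecCol.snd_lt_snd (h : ConsecCol T q ℓ) {i j : ℕ} (hij : i < j) (hj : j ≤ ℓ) :
    (q i).2 < (q j).2 :=
  h.strictMonoOn (Set.mem_Iic.2 (hij.le.trans hj)) (Set.mem_Iic.2 hj) hij

theorem ConsecCol.snd_le_snd_iff (h : ConsecCol T q ℓ) {i j : ℕ} (hi : i ≤ ℓ) (hj : j ≤ ℓ) :
    (q i).2 ≤ (q j).2 ↔ i ≤ j :=
  h.strictMonoOn.le_iff_le (Set.mem_Iic.2 hi) (Set.mem_Iic.2 hj)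

theorem ConsecCol.snd_lt_snd_iff (h : ConsecCol T q ℓ) {i j : ℕ} (hi : i ≤ ℓ) (hj : j ≤ ℓ) :
    (q i).2 < (q j).2 ↔ i < j :=
  h.strictMonoOn.lt_iff_lt (Set.mem_Iic.2 hi) (Set.mem_Iic.2 hj)

theorem ConsecCol.snd_le_snd (h : ConsecCol T q ℓ) {i j : ℕ} (hij : i ≤ j) (hj : j ≤ ℓ) :
    (q i).2 ≤ (q j).2 :=
  (h.snd_le_snd_iff (hij.trans hj) hj).2 hij

theorem ConsecCol.exists_eq (h : ConsecCol T q ℓ) {s : ℕ × ℕ} (hs : s ∈ T)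
    (hs1 : s.1 = (q 0).1) (h0 : (q 0).2 ≤ s.2) (hℓ : s.2 ≤ (q ℓ).2) : ∃ k ≤ ℓ, s = q k := by
  induction ℓ with
  | zero => exact ⟨0, le_rfl, Prod.ext hs1 (le_antisymm hℓ h0)⟩
  | succ ℓ ih =>
    rcases le_or_gt s.2 (q ℓ).2 with hs2 | hs2
    · obtain ⟨k, hk, rfl⟩ := ih (h.of_le ℓ.le_succ) hs2
      exact ⟨k, hk.trans ℓ.le_succ, rfl⟩
    · refine ⟨ℓ + 1, le_rfl, Prod.ext ?_ ?_⟩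
      · rw [hs1, h.2.1 _ le_rfl]
      · by_contra hne
        exact h.2.2.2 ℓ (Nat.lt_succ_self ℓ) s hs hs1 hs2 (lt_of_le_of_ne hℓ hne)

theorem ConsecCol.eq_of_top {q' : ℕ → ℕ × ℕ} (h : ConsecCol T q ℓ) (h' : ConsecCol T q' ℓ)
    (hcol : (q 0).1 = (q' 0).1) (htop : ∀ s ∈ T, s.1 = (q 0).1 → s.2 ≤ (q ℓ).2)
    (htop' : ∀ s ∈ T, s.1 = (q 0).1 → s.2 ≤ (q' ℓ).2) {k : ℕ} (hk : k ≤ ℓ) : q k = q' k := by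
  have hfst : ∀ i ≤ ℓ, (q i).1 = (q' i).1 := fun i hi => by rw [h.2.1 i hi, h'.2.1 i hi, hcol]
  induction hk using Nat.decreasingInduction with
  | self =>
    refine Prod.ext (hfst ℓ le_rfl) (le_antisymm ?_ ?_)
    · exact htop' _ (h.1 ℓ le_rfl) (h.2.1 ℓ le_rfl)
    · exact htop _ (h'.1 ℓ le_rfl) (by rw [h'.2.1 ℓ le_rfl, hcol])
  | of_succ k hk ih =>
    refine Prod.ext (hfst k hk.le) (le_antisymm (not_lt.1 fun hlt => ?_) (not_lt.1 fun hlt => ?_))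
    · refine h'.2.2.2 k hk _ (h.1 k hk.le) ?_ hlt ?_
      · rw [h.2.1 k hk.le, hcol]
      · rw [← ih]; exact h.2.2.1 k hk
    · refine h.2.2.2 k hk _ (h'.1 k hk.le) (by rw [h'.2.1 k hk.le, hcol]) hlt ?_
      rw [ih]; exact h'.2.2.1 k hk

end ColumnChains

section Rotations

variable {ω : List ℕ} {S T' : Set (ℕ × ℕ)} {q : ℕ × ℕ}

theorem RotationAt.exists_right (h : RotationAt ω S q T') :
    ∃ a, q.1 < a ∧ (a, q.2) ∈ S ∧ ∀ b, q.1 < b → b < a → (b, q.2) ∉ S := by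
  obtain ⟨p, r, -, -, hr, hpq1, hpq2, hrq2, hrq1, hempty, -⟩ := h
  refine ⟨r.1, hrq1, by rwa [← hrq2], fun b hb1 hb2 hbS => ?_⟩
  rcases hempty _ hbS hb1.le hb2.le le_rfl hpq2.le with he | he | he <;>
    simp only [Prod.ext_iff] at he <;> omega

theorem RotationAt.eq_of_nearest (h : RotationAt ω S q T') {p' r' : ℕ × ℕ} (hp' : p' ∈ S)
    (hp'1 : p'.1 = q.1) (hp'2 : q.2 < p'.2)
    (hp'gap : ∀ s ∈ S, s.1 = q.1 → q.2 < s.2 → s.2 < p'.2 → False) (hr' : r' ∈ S)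
    (hr'2 : r'.2 = q.2) (hr'1 : q.1 < r'.1)
    (hr'gap : ∀ s ∈ S, s.2 = q.2 → q.1 < s.1 → s.1 < r'.1 → False) :
    T' = insert (r'.1, p'.2) (S \ {q}) ∧
      ∀ s ∈ S, q.1 ≤ s.1 → s.1 ≤ r'.1 → q.2 ≤ s.2 → s.2 ≤ p'.2 → s = p' ∨ s = q ∨ s = r' := by
  obtain ⟨p, r, hp, -, hr, hpq1, hpq2, hrq2, hrq1, hempty, rfl⟩ := h
  have hpp' : p = p' := by
    have hle : p'.2 ≤ p.2 := not_lt.1 fun hlt => hp'gap p hp hpq1 hpq2 hlt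
    refine Prod.ext (hpq1.trans hp'1.symm) (le_antisymm (not_lt.1 fun hlt => ?_) hle)
    rcases hempty p' hp' hp'1.ge (by omega) hp'2.le hlt.le with he | he | he <;>
      simp only [Prod.ext_iff] at he <;> omega
  have hrr' : r = r' := by
    have hle : r'.1 ≤ r.1 := not_lt.1 fun hlt => hr'gap r hr hrq2 hrq1 hlt
    refine Prod.ext (le_antisymm (not_lt.1 fun hlt => ?_) hle) (hrq2.trans hr'2.symm)
    rcases hempty r' hr' hr'1.le hlt.le hr'2.ge (by omega) with he | he | he <;>
      simp only [Prod.ext_iff] at he <;> omega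
  subst hpp' hrr'
  exact ⟨rfl, hempty⟩

end Rotations

theorem Set.sdiff_union_sdiff_union_cancel {α : Type*} {U P Q : Set α} (hP : P ⊆ U)
    (hQ : Disjoint Q U) : (U \ P ∪ Q) \ Q ∪ P = U := by
  ext s
  have := @hP s
  have : s ∈ Q → s ∉ U := fun hs => Set.disjoint_left.1 hQ hs
  simp only [Set.mem_union, Set.mem_sdiff]
  tauto

/-- The result of rotating `B` successively at `(x, Y 0), …, (x, Y (k-1))`, the `i`-th rotation
trading `(x, Y i)` for `(x', Y (i+1))`. -/
def shiftCol (B : Set (ℕ × ℕ)) (x x' : ℕ) (Y : ℕ → ℕ) (k : ℕ) : Set (ℕ × ℕ) :=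
  B \ (fun i => (x, Y i)) '' Set.Iio k ∪ (fun i => (x', Y i)) '' Set.Ioc 0 k

/-- What the rotation of `shiftCol B x x' Y j` at `(x, Y j)` requires of `B`. -/
def CornersOnly (B : Set (ℕ × ℕ)) (x x' : ℕ) (Y : ℕ → ℕ) (j : ℕ) : Prop :=
  ∀ s ∈ B, x ≤ s.1 → s.1 ≤ x' → Y j ≤ s.2 → s.2 ≤ Y (j + 1) →
    s = (x, Y (j + 1)) ∨ s = (x, Y j) ∨ s = (x', Y j)

structure RightShiftData (B : Set (ℕ × ℕ)) (ℓ x x' : ℕ) (Y : ℕ → ℕ) : Prop where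
  consecCol : ConsecCol B (fun i => (x, Y i)) ℓ
  lt : x < x'
  mem_right : (x', Y 0) ∈ B
  cornersOnly : ∀ j < ℓ, CornersOnly B x x' Y j

section ShiftCol

variable {B : Set (ℕ × ℕ)} {x x' : ℕ} {Y : ℕ → ℕ} {k ℓ : ℕ}

theorem mem_shiftCol {a b : ℕ} : (a, b) ∈ shiftCol B x x' Y k ↔
    (a, b) ∈ B ∧ ¬ (a = x ∧ ∃ i < k, Y i = b) ∨ a = x' ∧ ∃ i, 0 < i ∧ i ≤ k ∧ Y i = b := by
  simp only [shiftCol, Set.mem_union, Set.mem_sdiff, Set.mem_image, Set.mem_Iio, Set.mem_Ioc,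
    Prod.mk.injEq]
  grind

theorem shiftCol_zero : shiftCol B x x' Y 0 = B := by
  simp [shiftCol]

theorem shiftCol_succ (hxx : x ≠ x') :
    shiftCol B x x' Y (k + 1) = insert (x', Y (k + 1)) (shiftCol B x x' Y k \ {(x, Y k)}) := by
  ext ⟨a, b⟩
  simp only [mem_shiftCol, Set.mem_insert_iff, Set.mem_sdiff, Set.mem_singleton_iff, Prod.mk.injEq]
  constructor
  · rintro (⟨hB, hX⟩ | ⟨rfl, i, hi0, hik, rfl⟩)
    · exact .inr ⟨.inl ⟨hB, fun ⟨ha, i, hi, hb⟩ => hX ⟨ha, i, by omega, hb⟩⟩,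
        fun ⟨ha, hb⟩ => hX ⟨ha, k, by omega, hb.symm⟩⟩
    · rcases Nat.le_succ_iff.1 hik with hik | rfl
      · exact .inr ⟨.inr ⟨rfl, i, hi0, hik, rfl⟩, fun ⟨ha, _⟩ => hxx ha.symm⟩
      · exact .inl ⟨rfl, rfl⟩
  · rintro (⟨rfl, rfl⟩ | ⟨⟨hB, hX⟩ | ⟨rfl, i, hi0, hik, rfl⟩, hne⟩)
    · exact .inr ⟨rfl, k + 1, by omega, le_rfl, rfl⟩
    · refine .inl ⟨hB, fun ⟨ha, i, hi, hb⟩ => ?_⟩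
      rcases Nat.lt_succ_iff_lt_or_eq.1 hi with hi | rfl
      · exact hX ⟨ha, i, hi, hb⟩
      · exact hne ⟨ha, hb.symm⟩
    · exact .inr ⟨rfl, i, hi0, by omega, rfl⟩

theorem mem_of_mem_shiftCol {s : ℕ × ℕ} (hs : s ∈ shiftCol B x x' Y k) (hs1 : s.1 ≠ x') :
    s ∈ B := by
  rcases hs with ⟨hB, -⟩ | ⟨i, -, rfl⟩
  exacts [hB, absurd rfl hs1]

theorem right_mem_shiftCol (hmem : (x', Y 0) ∈ B) (hxx : x ≠ x') {i : ℕ} (hik : i ≤ k) :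
    (x', Y i) ∈ shiftCol B x x' Y k := by
  rcases Nat.eq_zero_or_pos i with rfl | hi
  · exact mem_shiftCol.2 (.inl ⟨hmem, fun ⟨he, _⟩ => hxx he.symm⟩)
  · exact mem_shiftCol.2 (.inr ⟨rfl, i, hi, hik, rfl⟩)

theorem left_mem_shiftCol (hq : ConsecCol B (fun i => (x, Y i)) ℓ) {i : ℕ} (hki : k ≤ i)
    (hiℓ : i ≤ ℓ) : (x, Y i) ∈ shiftCol B x x' Y k := by
  refine mem_shiftCol.2 (.inl ⟨hq.1 i hiℓ, fun ⟨_, j, hj, hji⟩ => ?_⟩)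
  exact (hq.snd_lt_snd (show j < i by omega) hiℓ).ne hji

theorem CornersOnly.notMem_row {j : ℕ} (h : CornersOnly B x x' Y j) (hY : Y j < Y (j + 1))
    {a : ℕ} (ha : x < a) (ha' : a ≤ x') : (a, Y (j + 1)) ∉ B := fun hB => by
  rcases h _ hB ha.le ha' hY.le le_rfl with he | he | he <;>
    simp only [Prod.ext_iff] at he <;> omega

theorem RightShiftData.rotationAt (h : RightShiftData B ℓ x x' Y) (ω : List ℕ) (hk : k < ℓ) :
    RotationAt ω (shiftCol B x x' Y k) (x, Y k) (shiftCol B x x' Y (k + 1)) := by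
  refine ⟨(x, Y (k + 1)), (x', Y k), left_mem_shiftCol h.consecCol (by omega) hk,
    left_mem_shiftCol h.consecCol le_rfl hk.le, right_mem_shiftCol h.mem_right h.lt.ne le_rfl, rfl,
    h.consecCol.2.2.1 k hk, rfl, h.lt, fun s hs hs1 hs1' hs2 hs2' => ?_, shiftCol_succ h.lt.ne⟩
  obtain ⟨a, b⟩ := s
  rcases mem_shiftCol.1 hs with ⟨hB, -⟩ | ⟨rfl, i, -, hik, rfl⟩
  · exact h.cornersOnly k hk _ hB hs1 hs1' hs2 hs2'
  · have : k ≤ i := (h.consecCol.snd_le_snd_iff hk.le (hik.trans hk.le)).1 hs2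
    exact .inr (.inr (by rw [le_antisymm hik this]))

theorem shiftCol_step (hq : ConsecCol B (fun i => (x, Y i)) ℓ) (hxx : x < x') (hk : k < ℓ)
    (hr : (x', Y k) ∈ shiftCol B x x' Y k) (hgap : ∀ a, x < a → a < x' → (a, Y k) ∉ B)
    {ω : List ℕ} {T' : Set (ℕ × ℕ)} (hrot : RotationAt ω (shiftCol B x x' Y k) (x, Y k) T') :
    T' = shiftCol B x x' Y (k + 1) ∧ CornersOnly B x x' Y k := by
  have hlt := hq.2.2.1 k hk
  obtain ⟨hT', hempty⟩ := hrot.eq_of_nearest (p' := (x, Y (k + 1))) (r' := (x', Y k))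
    (left_mem_shiftCol hq (by omega) hk) rfl hlt
    (fun s hs hs1 hs2 hs2' => hq.2.2.2 k hk s (mem_of_mem_shiftCol hs (by omega)) hs1 hs2 hs2')
    hr rfl hxx
    (fun s hs hs2 hs1 hs1' => hgap s.1 hs1 hs1' (by
      rw [show Y k = s.2 from hs2.symm]; exact mem_of_mem_shiftCol hs hs1'.ne))
  refine ⟨hT'.trans (shiftCol_succ hxx.ne).symm,
    fun s hs hs1 hs1' hs2 hs2' => hempty s ?_ hs1 hs1' hs2 hs2'⟩
  obtain ⟨a, b⟩ := s
  refine mem_shiftCol.2 (.inl ⟨hs, fun ⟨_, i, hi, hib⟩ => ?_⟩)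
  have := hq.snd_lt_snd hi hk.le
  simp only at this hs2
  omega

theorem exists_rightShiftData_of_rotations {ω : List ℕ} {q : ℕ → ℕ × ℕ}
    (hq : ConsecCol B q ℓ) (hℓ : 1 ≤ ℓ) {c : ℕ → Set (ℕ × ℕ)} (hc0 : c 0 = B)
    (hrot : ∀ k < ℓ, RotationAt ω (c k) (q k) (c (k + 1))) :
    ∃ x', RightShiftData B ℓ (q 0).1 x' (fun i => (q i).2) ∧
      c ℓ = shiftCol B (q 0).1 x' (fun i => (q i).2) ℓ := by
  set x := (q 0).1
  set Y := fun i => (q i).2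
  have hqY : ∀ i ≤ ℓ, q i = (x, Y i) := fun i hi => Prod.ext (hq.2.1 i hi) rfl
  have hq' : ConsecCol B (fun i => (x, Y i)) ℓ :=
    ⟨fun i hi => by simpa only [hqY i hi] using hq.1 i hi, fun _ _ => rfl, hq.2.2.1, hq.2.2.2⟩
  obtain ⟨x', hxx, hmem, hgap0⟩ := (hrot 0 hℓ).exists_right
  rw [hc0] at hmem hgap0
  have key : ∀ k ≤ ℓ, c k = shiftCol B x x' Y k ∧ ∀ j < k, CornersOnly B x x' Y j := by
    intro k
    induction k with
    | zero => exact fun _ => ⟨by rw [hc0, shiftCol_zero], fun _ h => absurd h (Nat.not_lt_zero _)⟩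
    | succ k ih =>
      intro hk
      obtain ⟨hck, hcorners⟩ := ih (by omega)
      have hgap : ∀ a, x < a → a < x' → (a, Y k) ∉ B := by
        rcases Nat.eq_zero_or_pos k with rfl | hk0
        · exact hgap0
        · obtain ⟨j, rfl⟩ : ∃ j, k = j + 1 := ⟨k - 1, by omega⟩
          exact fun a ha ha' => (hcorners j (by omega)).notMem_row (hq.2.2.1 j (by omega)) ha ha'.le
      have hrk := hrot k (by omega)
      rw [hck, hqY k (by omega)] at hrk
      obtain ⟨hck', hcorner⟩ :=
        shiftCol_step hq' hxx (by omega) (right_mem_shiftCol hmem hxx.ne le_rfl) hgap hrk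
      exact ⟨hck', fun j hj => (Nat.lt_succ_iff_lt_or_eq.1 hj).elim (hcorners j) (· ▸ hcorner)⟩
  exact ⟨x', ⟨hq', hxx, hmem, (key ℓ le_rfl).2⟩, (key ℓ le_rfl).1⟩

end ShiftCol

/-- `(x', Y 0), …, (x', Y ℓ)` are the top `ℓ + 1` nodes of column `x'` of `T`, the lowest one is
relevant, and `(x, Y ℓ)` is the nearest node of `T` to the left of the top one. -/
structure RightTopData (ν δ : List ℕ) (T : Set (ℕ × ℕ)) (ℓ x x' : ℕ) (Y : ℕ → ℕ) : Prop where
  consecCol : ConsecCol T (fun i => (x', Y i)) ℓ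
  top : ∀ b, Y ℓ < b → (x', b) ∉ T
  lt : x < x'
  mem_left : (x, Y ℓ) ∈ T
  row_gap : ∀ a, x < a → a < x' → (a, Y ℓ) ∉ T
  relevant : rowStart ν δ (Y 0) < x'

def rightBottom (T : Set (ℕ × ℕ)) (x x' : ℕ) (Y : ℕ → ℕ) (ℓ : ℕ) : Set (ℕ × ℕ) :=
  T \ (fun i => (x', Y i)) '' Set.Ioc 0 ℓ ∪ (fun i => (x, Y i)) '' Set.Iio ℓ

section RightTop

variable {ν δ : List ℕ} {T : Set (ℕ × ℕ)} {ℓ x x' : ℕ} {Y : ℕ → ℕ}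

theorem mem_rightBottom {a b : ℕ} : (a, b) ∈ rightBottom T x x' Y ℓ ↔
    (a, b) ∈ T ∧ ¬ (a = x' ∧ ∃ i, 0 < i ∧ i ≤ ℓ ∧ Y i = b) ∨ a = x ∧ ∃ i < ℓ, Y i = b := by
  simp only [rightBottom, Set.mem_union, Set.mem_sdiff, Set.mem_image, Set.mem_Iio, Set.mem_Ioc,
    Prod.mk.injEq]
  grind

theorem mem_rightBottom_of_ne {t : ℕ × ℕ} (ht : t ∈ T) (h : t.1 ≠ x') :
    t ∈ rightBottom T x x' Y ℓ :=
  .inl ⟨ht, fun ⟨_, _, hi⟩ => h (congrArg Prod.fst hi).symm⟩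

namespace RightTopData

variable (h : RightTopData ν δ T ℓ x x' Y)
include h

theorem mem_right {k : ℕ} (hk : k ≤ ℓ) : (x', Y k) ∈ T := h.consecCol.1 k hk

theorem row_le_row {i j : ℕ} (hij : i ≤ j) (hj : j ≤ ℓ) : Y i ≤ Y j :=
  h.consecCol.snd_le_snd hij hj

theorem row_lt_row {i j : ℕ} (hij : i < j) (hj : j ≤ ℓ) : Y i < Y j :=
  h.consecCol.snd_lt_snd hij hj

theorem eq_of_mem_col {t : ℕ × ℕ} (ht : t ∈ T) (h1 : t.1 = x') (h0 : Y 0 ≤ t.2) :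
    ∃ i ≤ ℓ, t = (x', Y i) :=
  h.consecCol.exists_eq ht h1 h0 (not_lt.1 fun hlt => h.top t.2 hlt (by rw [← h1]; exact ht))

theorem left_mem_rightBottom {k : ℕ} (hk : k ≤ ℓ) : (x, Y k) ∈ rightBottom T x x' Y ℓ := by
  rcases hk.lt_or_eq with hk | rfl
  · exact .inr ⟨k, hk, rfl⟩
  · exact mem_rightBottom_of_ne h.mem_left h.lt.ne

theorem right_mem_rightBottom : (x', Y 0) ∈ rightBottom T x x' Y ℓ :=
  mem_rightBottom.2 (.inl ⟨h.consecCol.1 0 (Nat.zero_le _), fun ⟨_, _, hi, hiℓ, hY⟩ =>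
    (h.row_lt_row hi hiℓ).ne' hY⟩)

theorem le_rowEnd (hT : IsDNTree ν δ T) {k : ℕ} (hk : k ≤ ℓ) : x' ≤ rowEnd ν δ (Y k) :=
  (mem_Ldn.1 (hT.1 (h.mem_right hk))).2.2

theorem lt_length (hT : IsDNTree ν δ T) {k : ℕ} (hk : k ≤ ℓ) : Y k < ν.length :=
  (mem_Ldn.1 (hT.1 (h.mem_right hk))).1

variable (hδ : IsIncrement ν δ) (hT : IsDNTree ν δ T)
include hδ hT

theorem notMem_of_lt {t : ℕ × ℕ} (ht : t ∈ T) (h1 : t.1 < x') (h0 : Y 0 ≤ t.2)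
    (h2 : t.2 < Y ℓ) : False := by
  have := hT.rowEnd_lt hδ ht (h.mem_right le_rfl) h1 h2
  have := rowEnd_mono (ν := ν) (δ := δ) h0
  have := h.le_rowEnd hT (Nat.zero_le ℓ)
  omega

theorem notMem_above {t : ℕ × ℕ} (ht : t ∈ T) (h1 : x < t.1) (h2 : Y ℓ < t.2)
    (h3 : t.1 ≤ rowEnd ν δ (Y ℓ)) : False := by
  rcases lt_trichotomy t.1 x' with hc | hc | hc
  · exact (hT.rowEnd_lt hδ h.mem_left ht h1 h2).not_ge h3
  · exact h.top t.2 h2 (by rw [← hc]; exact ht)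
  · exact (hT.rowEnd_lt hδ (h.mem_right le_rfl) ht hc h2).not_ge h3

theorem left_notMem {k : ℕ} (hk : k < ℓ) : (x, Y k) ∉ T := fun hmem =>
  h.notMem_of_lt hδ hT hmem h.lt (h.row_le_row k.zero_le hk.le) (h.row_lt_row hk le_rfl)

/-- Otherwise the first point of row `Y 0`, moved up to row `Y ℓ`, could neither be added to `T` nor
conflict with a node of `T`. -/
theorem rowStart_le : rowStart ν δ (Y 0) ≤ x := by
  by_contra! hx
  set u := rowStart ν δ (Y 0)
  have h0ℓ : Y 0 ≤ Y ℓ := h.row_le_row ℓ.zero_le le_rfl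
  have hw : (u, Y ℓ) ∈ Ldn ν δ := mem_Ldn.2 ⟨h.lt_length hT le_rfl,
    hδ.rowStart_anti h0ℓ, show u ≤ _ from (h.relevant.trans_le (h.le_rowEnd hT le_rfl)).le⟩
  obtain ⟨t, ht, ⟨h1, h2, -, h4⟩ | ⟨h1, h2, -, h4⟩⟩ :=
    hT.exists_swIncomp hδ hw (h.row_gap u hx h.relevant)
  · rcases lt_or_ge t.2 (Y 0) with h0 | h0
    · have := (mem_Ldn.1 (hT.1 ht)).2.1
      have := hδ.rowStart_anti h0.le
      simp only at h1 h2
      omega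
    · exact h.notMem_of_lt hδ hT ht (by have := h.relevant; simp only at h1; omega) h0 h2
  · exact h.notMem_above hδ hT ht (by simp only at h1; omega) h2 h4

theorem rightBottom_subset_Ldn : rightBottom T x x' Y ℓ ⊆ Ldn ν δ := by
  rintro s (⟨hs, -⟩ | ⟨i, hi, rfl⟩)
  · exact hT.1 hs
  · have hi' : i ≤ ℓ := le_of_lt hi
    refine mem_Ldn.2 ⟨h.lt_length hT hi', ?_, (h.lt.trans_le (h.le_rowEnd hT hi')).le⟩
    exact (hδ.rowStart_anti (h.row_le_row i.zero_le hi')).trans (h.rowStart_le hδ hT)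

theorem not_swIncomp_left {k : ℕ} (hk : k ≤ ℓ) {t : ℕ × ℕ} (ht : t ∈ T)
    (htB : t ∈ rightBottom T x x' Y ℓ) : ¬ SWIncomp ν δ (x, Y k) t := by
  rintro ⟨h1, h2, -, h4⟩
  simp only at h1 h2 h4
  have hkℓ := h.row_le_row hk le_rfl
  have h0k := h.row_le_row k.zero_le hk
  rcases lt_or_ge (Y ℓ) t.2 with hℓ | hℓ
  · exact h.notMem_above hδ hT ht h1 hℓ (h4.trans (rowEnd_mono hkℓ))
  rcases lt_trichotomy t.1 x' with hc | hc | hc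
  · rcases hℓ.lt_or_eq with hℓ | hℓ
    · exact h.notMem_of_lt hδ hT ht hc (h0k.trans h2.le) hℓ
    · exact h.row_gap t.1 h1 hc (by rw [← hℓ]; exact ht)
  · obtain ⟨i, hi, rfl⟩ := h.eq_of_mem_col ht hc (h0k.trans h2.le)
    rcases Nat.eq_zero_or_pos i with rfl | hi0
    · exact h2.not_ge h0k
    · rcases htB with ⟨-, hA⟩ | ⟨j, -, hj⟩
      · exact hA ⟨i, ⟨hi0, hi⟩, rfl⟩
      · exact h.lt.ne (congrArg Prod.fst hj)
  · exact (hT.rowEnd_lt hδ (h.mem_right hk) ht hc h2).not_ge h4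

theorem not_swIncomp_to_left {k : ℕ} (hk : k ≤ ℓ) {t : ℕ × ℕ} (ht : t ∈ T) :
    ¬ SWIncomp ν δ t (x, Y k) := fun ⟨h1, h2, _, h4⟩ =>
  (hT.rowEnd_lt hδ ht h.mem_left h1
    (h2.trans_le (h.row_le_row hk le_rfl))).not_ge h4

theorem rightBottom_compat :
    ∀ p ∈ rightBottom T x x' Y ℓ, ∀ q ∈ rightBottom T x x' Y ℓ, ¬ SWIncomp ν δ p q := by
  rintro p hpB q hqB
  rcases id hpB with ⟨hp, -⟩ | ⟨i, hi, rfl⟩ <;> rcases id hqB with ⟨hq, -⟩ | ⟨j, hj, rfl⟩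
  · exact hδ.pairwiseCompat_iff.1 hT.2.1 p hp q hq
  · exact h.not_swIncomp_to_left hδ hT (le_of_lt hj) hp
  · exact h.not_swIncomp_left hδ hT (le_of_lt hi) hq hqB
  · exact fun hpq => hpq.1.ne rfl

theorem exists_swIncomp_of_fst_eq {z : ℕ × ℕ} (hz : z ∈ Ldn ν δ)
    (hzB : z ∉ rightBottom T x x' Y ℓ) (h1 : z.1 = x) (h0 : Y 0 ≤ z.2) (h2 : z.2 < Y ℓ)
    (h4 : x' ≤ rowEnd ν δ z.2) : ∃ t ∈ rightBottom T x x' Y ℓ, SWIncomp ν δ z t := by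
  have hzL := mem_Ldn.1 hz
  have hw : (x', z.2) ∈ Ldn ν δ :=
    mem_Ldn.2 ⟨hzL.1, show rowStart ν δ z.2 ≤ x' by have := h.lt; omega, h4⟩
  have hwT : (x', z.2) ∉ T := fun hm => by
    obtain ⟨i, hi, hiz⟩ := h.eq_of_mem_col hm rfl h0
    have hz2 : z.2 = Y i := congrArg Prod.snd hiz
    have hiℓ : i < ℓ := lt_of_le_of_ne hi (by rintro rfl; omega)
    exact hzB (by rw [show z = (x, Y i) from Prod.ext h1 hz2]; exact .inr ⟨i, hiℓ, rfl⟩)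
  obtain ⟨t, ht, ⟨g1, g2, -, g4⟩ | ⟨g1, g2, -, g4⟩⟩ := hT.exists_swIncomp hδ hw hwT
  · simp only at g1 g2 g4
    rcases le_or_gt (Y 0) t.2 with ht0 | ht0
    · exact (h.notMem_of_lt hδ hT ht g1 ht0 (g2.trans h2)).elim
    · exact ((hT.rowEnd_lt hδ ht (h.mem_right (Nat.zero_le _)) g1 ht0).not_ge g4).elim
  · simp only at g1 g2 g4
    exact ⟨t, mem_rightBottom_of_ne ht g1.ne', by rw [h1]; exact h.lt.trans g1, g2, hzL.1, g4⟩

theorem exists_swIncomp_of_lt_fst {z : ℕ × ℕ} (hz : z ∈ Ldn ν δ) (h1 : x < z.1) (h1' : z.1 < x')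
    (h0 : Y 0 ≤ z.2) (h2 : z.2 < Y ℓ) : ∃ t ∈ rightBottom T x x' Y ℓ, SWIncomp ν δ t z := by
  have hzL := mem_Ldn.1 hz
  have hw : (z.1, Y ℓ) ∈ Ldn ν δ := mem_Ldn.2 ⟨h.lt_length hT le_rfl,
    (hδ.rowStart_anti h2.le).trans hzL.2.1, h1'.le.trans (h.le_rowEnd hT le_rfl)⟩
  obtain ⟨t, ht, ⟨g1, g2, g3, g4⟩ | ⟨g1, g2, -, g4⟩⟩ :=
    hT.exists_swIncomp hδ hw (h.row_gap z.1 h1 h1')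
  · simp only at g1 g2 g4
    rcases le_or_gt (Y 0) t.2 with ht0 | ht0
    · exact (h.notMem_of_lt hδ hT ht (g1.trans h1') ht0 g2).elim
    · exact ⟨t, mem_rightBottom_of_ne ht (g1.trans h1').ne, g1, ht0.trans_le h0, g3, g4⟩
  · exact (h.notMem_above hδ hT ht (h1.trans g1) g2 g4).elim

theorem exists_swIncomp_of_sw {z : ℕ × ℕ} (hz : z ∈ Ldn ν δ) (hzB : z ∉ rightBottom T x x' Y ℓ)
    (h1 : z.1 < x') (h2 : z.2 < Y ℓ) (h4 : x' ≤ rowEnd ν δ z.2) :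
    ∃ t ∈ rightBottom T x x' Y ℓ, SWIncomp ν δ t z ∨ SWIncomp ν δ z t := by
  have hzL := (mem_Ldn.1 hz).1
  rcases lt_or_ge z.1 x with hx | hx
  · exact ⟨_, h.left_mem_rightBottom le_rfl, .inr ⟨hx, h2, hzL, h.lt.le.trans h4⟩⟩
  rcases lt_or_ge z.2 (Y 0) with h0 | h0
  · exact ⟨_, h.right_mem_rightBottom, .inr ⟨h1, h0, hzL, h4⟩⟩
  rcases hx.lt_or_eq with hx | hx
  · obtain ⟨t, htB, hc⟩ := h.exists_swIncomp_of_lt_fst hδ hT hz hx h1 h0 h2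
    exact ⟨t, htB, .inl hc⟩
  · obtain ⟨t, htB, hc⟩ := h.exists_swIncomp_of_fst_eq hδ hT hz hzB hx.symm h0 h2 h4
    exact ⟨t, htB, .inr hc⟩

theorem exists_swIncomp_rightBottom {z : ℕ × ℕ} (hz : z ∈ Ldn ν δ)
    (hzB : z ∉ rightBottom T x x' Y ℓ) :
    ∃ t ∈ rightBottom T x x' Y ℓ, SWIncomp ν δ t z ∨ SWIncomp ν δ z t := by
  by_cases hzT : z ∈ T
  · obtain ⟨i, ⟨hi0, hi⟩, rfl⟩ : z ∈ (fun i => (x', Y i)) '' Set.Ioc 0 ℓ := by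
      by_contra hA; exact hzB (.inl ⟨hzT, hA⟩)
    exact ⟨_, h.left_mem_rightBottom (k := i - 1) (by omega), .inl ⟨h.lt,
      h.row_lt_row (by omega) hi, h.lt_length hT (by omega), h.le_rowEnd hT (by omega)⟩⟩
  obtain ⟨t, ht, hc⟩ := hT.exists_swIncomp hδ hz hzT
  by_cases htB : t ∈ rightBottom T x x' Y ℓ
  · exact ⟨t, htB, hc⟩
  obtain ⟨j, ⟨-, hj⟩, rfl⟩ : t ∈ (fun i => (x', Y i)) '' Set.Ioc 0 ℓ := by
    by_contra hA; exact htB (.inl ⟨ht, hA⟩)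
  rcases hc with ⟨h1, h2, h3, h4⟩ | ⟨h1, h2, -, h4⟩
  · exact ⟨_, h.left_mem_rightBottom hj, .inl ⟨h.lt.trans h1, h2, h3, h4⟩⟩
  · exact h.exists_swIncomp_of_sw hδ hT hz hzB h1
      (h2.trans_le (h.row_le_row hj le_rfl)) h4

theorem isDNTree_rightBottom : IsDNTree ν δ (rightBottom T x x' Y ℓ) :=
  isDNTree_of_forall_exists_swIncomp hδ (h.rightBottom_subset_Ldn hδ hT)
    (h.rightBottom_compat hδ hT) fun _ hz hzB => h.exists_swIncomp_rightBottom hδ hT hz hzB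

theorem cornersOnly_rightBottom {j : ℕ} (hj : j < ℓ) :
    CornersOnly (rightBottom T x x' Y ℓ) x x' Y j := by
  rintro s (⟨hs, hsA⟩ | ⟨i, hi, rfl⟩) hs1 hs1' hs2 hs2'
  · rcases hs1'.lt_or_eq with hs1' | hs1'
    · rcases (hs2'.trans (h.row_le_row hj le_rfl)).lt_or_eq with hs2ℓ | hs2ℓ
      · exact (h.notMem_of_lt hδ hT hs hs1' ((h.row_le_row j.zero_le hj.le).trans hs2) hs2ℓ).elim
      · have hjℓ : j + 1 = ℓ := by
          by_contra hne
          have := h.row_lt_row (show j + 1 < ℓ by omega) le_rfl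
          omega
        have hsx : s.1 = x := by
          by_contra hne
          exact h.row_gap s.1 (lt_of_le_of_ne hs1 (Ne.symm hne)) hs1' (by rw [← hs2ℓ]; exact hs)
        exact .inl (Prod.ext hsx (hs2ℓ.trans (by rw [hjℓ])))
    · obtain ⟨i, hi, rfl⟩ := h.eq_of_mem_col hs hs1' ((h.row_le_row j.zero_le hj.le).trans hs2)
      rcases Nat.eq_zero_or_pos i with rfl | hi0
      · have := (h.consecCol.snd_le_snd_iff hj.le (Nat.zero_le _)).1 hs2
        obtain rfl : j = 0 := by omega
        exact .inr (.inr rfl)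
      · exact (hsA ⟨i, ⟨hi0, hi⟩, rfl⟩).elim
  · have h1 := (h.consecCol.snd_le_snd_iff hj.le hi.le).1 hs2
    have h2 := (h.consecCol.snd_le_snd_iff hi.le (show j + 1 ≤ ℓ by omega)).1 hs2'
    rcases (show i = j + 1 ∨ i = j by omega) with rfl | rfl
    exacts [.inl rfl, .inr (.inl rfl)]

theorem rightShiftData_rightBottom : RightShiftData (rightBottom T x x' Y ℓ) ℓ x x' Y := by
  refine ⟨⟨fun i hi => h.left_mem_rightBottom hi, fun _ _ => rfl, h.consecCol.2.2.1, ?_⟩, h.lt,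
    h.right_mem_rightBottom, fun j hj => h.cornersOnly_rightBottom hδ hT hj⟩
  rintro k hk s (⟨hs, -⟩ | ⟨i, hi, rfl⟩) hs1 hs2 hs2'
  · exact h.notMem_of_lt hδ hT hs (by rw [hs1]; exact h.lt)
      ((h.row_le_row k.zero_le hk.le).trans hs2.le) (hs2'.trans_le (h.row_le_row hk le_rfl))
  · have h1 := (h.consecCol.snd_lt_snd_iff hk.le hi.le).1 hs2
    have h2 := (h.consecCol.snd_lt_snd_iff hi.le (show k + 1 ≤ ℓ by omega)).1 hs2'
    omega

theorem shiftCol_rightBottom : shiftCol (rightBottom T x x' Y ℓ) x x' Y ℓ = T := by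
  refine Set.sdiff_union_sdiff_union_cancel ?_ (Set.disjoint_left.2 ?_)
  · rintro _ ⟨i, ⟨-, hi⟩, rfl⟩
    exact h.mem_right hi
  · rintro _ ⟨i, hi, rfl⟩
    exact h.left_notMem hδ hT hi

end RightTopData

end RightTop

namespace RightShiftData

variable {ν δ : List ℕ} {B : Set (ℕ × ℕ)} {ℓ x x' : ℕ} {Y : ℕ → ℕ}
variable (h : RightShiftData B ℓ x x' Y)
include h

theorem rightBottom_shiftCol : rightBottom (shiftCol B x x' Y ℓ) x x' Y ℓ = B := by
  refine Set.sdiff_union_sdiff_union_cancel ?_ (Set.disjoint_left.2 ?_)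
  · rintro _ ⟨i, hi, rfl⟩
    exact h.consecCol.1 i (le_of_lt hi)
  · rintro _ ⟨i, ⟨hi0, hi⟩, rfl⟩ hB
    obtain ⟨j, rfl⟩ : ∃ j, i = j + 1 := ⟨i - 1, by omega⟩
    exact (h.cornersOnly j (by omega)).notMem_row (h.consecCol.2.2.1 j (by omega)) h.lt le_rfl hB

theorem rightTopData (hδ : IsIncrement ν δ) (hB : IsDNTree ν δ B) (hℓ : 1 ≤ ℓ) :
    RightTopData ν δ (shiftCol B x x' Y ℓ) ℓ x x' Y := by
  have hq := h.consecCol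
  have hxL := mem_Ldn.1 (hB.1 (hq.1 0 (Nat.zero_le _)))
  refine ⟨⟨fun i hi => right_mem_shiftCol h.mem_right h.lt.ne hi, fun _ _ => rfl, hq.2.2.1, ?_⟩,
    ?_, h.lt, left_mem_shiftCol hq ℓ.le_refl le_rfl, ?_, hxL.2.1.trans_lt h.lt⟩
  · intro k hk s hs hs1 hb hb'
    obtain ⟨a, b⟩ := s
    simp only at hs1 hb hb'
    subst hs1
    have hxx := h.lt
    rcases mem_shiftCol.1 hs with ⟨hs, -⟩ | ⟨-, i, -, hi, rfl⟩
    · rcases h.cornersOnly k hk _ hs h.lt.le le_rfl hb.le hb'.le with he | he | he <;>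
        simp only [Prod.ext_iff] at he <;> omega
    · have h1 := (hq.snd_lt_snd_iff hk.le hi).1 hb
      have h2 := (hq.snd_lt_snd_iff hi (show k + 1 ≤ ℓ by omega)).1 hb'
      omega
  · intro b hb hs
    rcases mem_shiftCol.1 hs with ⟨hs, -⟩ | ⟨-, i, -, hi, rfl⟩
    · have hxℓ : rowEnd ν δ (Y ℓ) < x' := hB.rowEnd_lt hδ (hq.1 ℓ le_rfl) hs h.lt hb
      have hx' : x' ≤ rowEnd ν δ (Y 0) := (mem_Ldn.1 (hB.1 h.mem_right)).2.2
      have := rowEnd_mono (ν := ν) (δ := δ) (hq.snd_le_snd (Nat.zero_le ℓ) le_rfl)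
      simp only at this
      omega
    · exact (hq.snd_le_snd hi le_rfl).not_gt hb
  · intro a ha ha' hs
    obtain ⟨j, rfl⟩ : ∃ j, ℓ = j + 1 := ⟨ℓ - 1, by omega⟩
    exact (h.cornersOnly j (by omega)).notMem_row (hq.2.2.1 j (by omega)) ha ha'.le
      (mem_of_mem_shiftCol hs ha'.ne)

end RightShiftData

theorem isRightDNItv_iff {ν δ : List ℕ} {T B : Set (ℕ × ℕ)} {ℓ : ℕ} (hδ : IsIncrement ν δ)
    (hT : IsDNTree ν δ T) (hℓ : 1 ≤ ℓ) : IsRightDNItv ν δ B T ℓ ↔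
      ∃ x x' Y, RightTopData ν δ T ℓ x x' Y ∧ B = rightBottom T x x' Y ℓ := by
  constructor
  · rintro ⟨hB, -, q, hq, c, hc0, rfl, hrot⟩
    obtain ⟨x', hdata, hc⟩ := exists_rightShiftData_of_rotations hq hℓ hc0 hrot
    rw [hc]
    exact ⟨_, x', _, hdata.rightTopData hδ hB hℓ, hdata.rightBottom_shiftCol.symm⟩
  · rintro ⟨x, x', Y, h, rfl⟩
    have hs := h.rightShiftData_rightBottom hδ hT
    exact ⟨h.isDNTree_rightBottom hδ hT, hℓ, _, hs.consecCol, shiftCol _ x x' Y, shiftCol_zero,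
      h.shiftCol_rightBottom hδ hT, fun k hk => hs.rotationAt _ hk⟩

section Counting

variable {ν δ : List ℕ} {T : Set (ℕ × ℕ)} {ℓ x' : ℕ}

theorem IsDNTree.rcolTN_eq (hT : IsDNTree ν δ T) (x' : ℕ) :
    rcolTN ν δ T x' = {b | (x', b) ∈ T ∧ rowStart ν δ b < x'}.ncard := by
  rw [rcolTN, ← (Prod.mk_right_injective x').injOn.ncard_image
    (s := {b | (x', b) ∈ T ∧ rowStart ν δ b < x'})]
  refine congrArg Set.ncard (Set.ext fun ⟨a, b⟩ => ?_)
  simp only [Set.mem_image, Set.mem_ofPred_eq, relevant_iff, Prod.mk.injEq]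
  constructor
  · rintro ⟨hs, rfl, -, hrel⟩
    exact ⟨b, ⟨hs, hrel⟩, rfl, rfl⟩
  · rintro ⟨b, ⟨hs, hrel⟩, rfl, rfl⟩
    exact ⟨hs, rfl, hT.1 hs, hrel⟩

theorem RightTopData.succ_le_rcolTN {x : ℕ} {Y : ℕ → ℕ} (h : RightTopData ν δ T ℓ x x' Y)
    (hδ : IsIncrement ν δ) (hT : IsDNTree ν δ T) : ℓ + 1 ≤ rcolTN ν δ T x' := by
  rw [hT.rcolTN_eq, ← Nat.card_Iic ℓ, ← Set.ncard_coe_finset, Finset.coe_Iic,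
    ← h.consecCol.strictMonoOn.injOn.ncard_image]
  refine Set.ncard_le_ncard ?_ ((hδ.finite_Ldn.image Prod.snd).subset ?_)
  · rintro _ ⟨k, hk, rfl⟩
    exact ⟨h.mem_right hk, (hδ.rowStart_anti (h.row_le_row k.zero_le hk)).trans_lt h.relevant⟩
  · exact fun b hb => ⟨(x', b), hT.1 hb.1, rfl⟩

theorem IsDNTree.exists_left_of_top (hδ : IsIncrement ν δ) (hT : IsDNTree ν δ T) {y : ℕ}
    (hs : (x', y) ∈ T) (htop : ∀ b, y < b → (x', b) ∉ T) (hrel : rowStart ν δ y < x') :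
    ∃ a < x', (a, y) ∈ T := by
  classical
  by_contra! hno
  have hsL := mem_Ldn.1 (hT.1 hs)
  -- a conflict of `(e, y)` can only lie northeast of it, left of column `x'`
  have step : ∀ e, rowStart ν δ y ≤ e → e < x' → (e = rowStart ν δ y ∨ ∃ f, y < f ∧ (e, f) ∈ T) →
      ∃ e', e < e' ∧ e' < x' ∧ ∃ f, y < f ∧ (e', f) ∈ T := by
    intro e he1 he2 he
    have heL : (e, y) ∈ Ldn ν δ := mem_Ldn.2 ⟨hsL.1, he1, he2.le.trans hsL.2.2⟩
    obtain ⟨t, ht, ⟨h1, h2, -, h4⟩ | ⟨h1, h2, -, h4⟩⟩ := hT.exists_swIncomp hδ heL (hno e he2)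
    · exfalso
      simp only at h1 h2 h4
      rcases he with rfl | ⟨f, hf, hfT⟩
      · have := (mem_Ldn.1 (hT.1 ht)).2.1
        have := hδ.rowStart_anti h2.le
        omega
      · exact (hT.rowEnd_lt hδ ht hfT h1 (h2.trans hf)).not_ge h4
    · simp only at h1 h2 h4
      rcases lt_trichotomy t.1 x' with hc | hc | hc
      · exact ⟨t.1, h1, hc, t.2, h2, ht⟩
      · exact (htop t.2 h2 (by rw [← hc]; exact ht)).elim
      · exact ((hT.rowEnd_lt hδ hs ht hc h2).not_ge h4).elim
  obtain ⟨e₁, he₁', he₁, hf₁⟩ := step _ le_rfl hrel (.inl rfl)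
  set P := fun e => ∃ f, y < f ∧ (e, f) ∈ T
  have hE := Nat.findGreatest_spec (P := P) (show e₁ ≤ x' - 1 by omega) hf₁
  have hE₁ := Nat.le_findGreatest (P := P) (show e₁ ≤ x' - 1 by omega) hf₁
  have hEx' := Nat.findGreatest_le (P := P) (x' - 1)
  obtain ⟨e₂, h1, h2, hf₂⟩ := step _ (by omega) (by omega) (.inr hE)
  exact Nat.findGreatest_is_greatest h1 (by omega) hf₂

/-- The top `ℓ + 1` relevant nodes of column `x'`, enumerated with `Nat.nth`. -/
theorem IsDNTree.exists_top_run (hδ : IsIncrement ν δ) (hT : IsDNTree ν δ T)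
    (hcol : ℓ + 1 ≤ rcolTN ν δ T x') : ∃ Y : ℕ → ℕ, ConsecCol T (fun i => (x', Y i)) ℓ ∧
      (∀ b, Y ℓ < b → (x', b) ∉ T) ∧ rowStart ν δ (Y 0) < x' := by
  set p := fun b => (x', b) ∈ T ∧ rowStart ν δ b < x'
  have hf : (Set.ofPred p).Finite :=
    (hδ.finite_Ldn.image Prod.snd).subset fun b hb => ⟨(x', b), hT.1 hb.1, rfl⟩
  set N := hf.toFinset.card
  have hN : ℓ + 1 ≤ N := by rwa [hT.rcolTN_eq, Set.ncard_eq_toFinset_card _ hf] at hcol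
  have hup : ∀ {b b'}, p b → (x', b') ∈ T → b ≤ b' → p b' := fun hb hs hbb' =>
    ⟨hs, (hδ.rowStart_anti hbb').trans_lt hb.2⟩
  refine ⟨fun k => Nat.nth p (N - (ℓ + 1) + k), ⟨fun k hk => (Nat.nth_mem_of_lt_card hf
    (by omega)).1, fun _ _ => rfl, fun k hk => Nat.nth_lt_nth_of_lt_card hf (by omega) (by omega),
    ?_⟩, ?_, (Nat.nth_mem_of_lt_card hf (by omega)).2⟩
  · rintro k hk ⟨a, b⟩ hs (rfl : a = x') h1 h2
    obtain ⟨n, hn, rfl⟩ :=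
      Nat.exists_lt_card_finite_nth_eq hf (hup (Nat.nth_mem_of_lt_card hf (by omega)) hs h1.le)
    have := Nat.lt_of_nth_lt_nth_of_lt_card hf h1 (by omega)
    have := Nat.lt_of_nth_lt_nth_of_lt_card hf h2 hn
    omega
  · intro b hb hs
    obtain ⟨n, hn, rfl⟩ :=
      Nat.exists_lt_card_finite_nth_eq hf (hup (Nat.nth_mem_of_lt_card hf (by omega)) hs hb.le)
    have := Nat.lt_of_nth_lt_nth_of_lt_card hf hb (by omega)
    omega

theorem IsDNTree.exists_rightTopData (hδ : IsIncrement ν δ) (hT : IsDNTree ν δ T)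
    (hcol : ℓ + 1 ≤ rcolTN ν δ T x') : ∃ x Y, RightTopData ν δ T ℓ x x' Y := by
  classical
  obtain ⟨Y, hq, htop, hrel⟩ := hT.exists_top_run hδ hcol
  obtain ⟨a, ha, haT⟩ := hT.exists_left_of_top hδ (hq.1 ℓ le_rfl) htop
    ((hδ.rowStart_anti (hq.snd_le_snd ℓ.zero_le le_rfl)).trans_lt hrel)
  set P := fun a => (a, Y ℓ) ∈ T
  have hx := Nat.findGreatest_spec (P := P) (show a ≤ x' - 1 by omega) haT
  have hax := Nat.le_findGreatest (P := P) (show a ≤ x' - 1 by omega) haT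
  have hxx' := Nat.findGreatest_le (P := P) (x' - 1)
  refine ⟨Nat.findGreatest P (x' - 1), Y, hq, htop, by omega, hx, fun b hb hb' hbT => ?_, hrel⟩
  exact Nat.findGreatest_is_greatest hb (by omega) hbT

theorem RightTopData.rightBottom_eq {x₁ x₂ : ℕ} {Y₁ Y₂ : ℕ → ℕ}
    (h₁ : RightTopData ν δ T ℓ x₁ x' Y₁) (h₂ : RightTopData ν δ T ℓ x₂ x' Y₂) :
    rightBottom T x₁ x' Y₁ ℓ = rightBottom T x₂ x' Y₂ ℓ := by
  have htop {x Y} (h : RightTopData ν δ T ℓ x x' Y) (s : ℕ × ℕ) (hs : s ∈ T) (hs1 : s.1 = x') :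
      s.2 ≤ Y ℓ :=
    not_lt.1 fun hlt => h.top s.2 hlt (by rw [← hs1]; exact hs)
  have hY : ∀ k ≤ ℓ, Y₁ k = Y₂ k := fun k hk => congrArg Prod.snd
    (h₁.consecCol.eq_of_top h₂.consecCol rfl (htop h₁) (htop h₂) hk)
  have hx : x₁ = x₂ := by
    rcases lt_trichotomy x₁ x₂ with hc | hc | hc
    · exact (h₁.row_gap x₂ hc h₂.lt (by rw [hY ℓ le_rfl]; exact h₂.mem_left)).elim
    · exact hc
    · exact (h₂.row_gap x₁ hc h₁.lt (by rw [← hY ℓ le_rfl]; exact h₁.mem_left)).elim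
  have hEq : ∀ (z : ℕ) (I : Set ℕ), I ⊆ Set.Iic ℓ →
      (fun i => (z, Y₁ i)) '' I = (fun i => (z, Y₂ i)) '' I := fun z I hI =>
    Set.image_congr fun i hi => by rw [hY i (hI hi)]
  rw [rightBottom, rightBottom, hx, hEq _ _ Set.Ioc_subset_Iic_self,
    hEq _ _ fun i hi => le_of_lt (Set.mem_Iio.1 hi)]

theorem RightTopData.sSup_fst_sdiff_rightBottom {x : ℕ} {Y : ℕ → ℕ}
    (h : RightTopData ν δ T ℓ x x' Y) (hℓ : 1 ≤ ℓ) :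
    sSup (Prod.fst '' (T \ rightBottom T x x' Y ℓ)) = x' := by
  suffices Prod.fst '' (T \ rightBottom T x x' Y ℓ) = {x'} by rw [this, csSup_singleton]
  refine Set.eq_singleton_iff_unique_mem.2 ⟨⟨(x', Y 1), ⟨h.mem_right hℓ, ?_⟩, rfl⟩, ?_⟩
  · rintro (⟨-, hA⟩ | ⟨i, -, he⟩)
    · exact hA ⟨1, ⟨Nat.one_pos, hℓ⟩, rfl⟩
    · exact h.lt.ne (congrArg Prod.fst he)
  · rintro _ ⟨s, ⟨hs, hsB⟩, rfl⟩
    by_contra hne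
    exact hsB (mem_rightBottom_of_ne hs hne)

/-- A bottom `B` is sent to the column of the nodes of `T` that are missing from `B`. -/
theorem ncard_setOf_isRightDNItv (hδ : IsIncrement ν δ) (hT : IsDNTree ν δ T) (hℓ : 1 ≤ ℓ) :
    {B | IsRightDNItv ν δ B T ℓ}.ncard = {x' | ℓ + 1 ≤ rcolTN ν δ T x'}.ncard := by
  refine Set.ncard_congr (fun B _ => sSup (Prod.fst '' (T \ B))) ?_ ?_ ?_
  · rintro B hB
    obtain ⟨x, x', Y, h, rfl⟩ := (isRightDNItv_iff hδ hT hℓ).1 hB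
    rw [Set.mem_ofPred_eq, h.sSup_fst_sdiff_rightBottom hℓ]
    exact h.succ_le_rcolTN hδ hT
  · rintro B₁ B₂ hB₁ hB₂ he
    obtain ⟨x₁, x₁', Y₁, h₁, rfl⟩ := (isRightDNItv_iff hδ hT hℓ).1 hB₁
    obtain ⟨x₂, x₂', Y₂, h₂, rfl⟩ := (isRightDNItv_iff hδ hT hℓ).1 hB₂
    simp only [h₁.sSup_fst_sdiff_rightBottom hℓ, h₂.sSup_fst_sdiff_rightBottom hℓ] at he
    subst he
    exact h₁.rightBottom_eq h₂
  · intro x' hx'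
    obtain ⟨x, Y, h⟩ := hT.exists_rightTopData hδ hx'
    exact ⟨_, (isRightDNItv_iff hδ hT hℓ).2 ⟨x, x', Y, h, rfl⟩, h.sSup_fst_sdiff_rightBottom hℓ⟩

end Counting

section Reindexing

variable {ν δ : List ℕ} {T : Set (ℕ × ℕ)} {j : ℕ → ℕ}

theorem RColOrder.image_range (hj : RColOrder ν δ j) :
    (Finset.range ν.sum).image j = Finset.Icc 1 ν.sum := by
  refine Finset.eq_of_subset_of_card_le (fun y hy => ?_) ?_
  · obtain ⟨i, hi, rfl⟩ := Finset.mem_image.1 hy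
    exact Finset.mem_Icc.2 (hj.1 i (Finset.mem_range.1 hi))
  · rw [Finset.card_image_of_injOn fun a ha b hb =>
      hj.2.1 a b (Finset.mem_range.1 ha) (Finset.mem_range.1 hb), Finset.card_range,
      Nat.card_Icc, Nat.add_sub_cancel]

theorem IsDNTree.mem_Icc_of_rcolTN_ne_zero (hδ : IsIncrement ν δ) (hT : IsDNTree ν δ T) {x' : ℕ}
    (h : rcolTN ν δ T x' ≠ 0) : x' ∈ Finset.Icc 1 ν.sum := by
  rw [hT.rcolTN_eq] at h
  obtain ⟨b, hb, hrel⟩ := Set.nonempty_of_ncard_ne_zero h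
  have := (mem_Ldn.1 (hT.1 hb)).2.2.trans (hδ.rowEnd_le b)
  exact Finset.mem_Icc.2 ⟨by simp only at hrel this; omega, this⟩

theorem setOf_succ_le_rcolTN_eq (hδ : IsIncrement ν δ) (hT : IsDNTree ν δ T)
    (hj : RColOrder ν δ j) {c : List ℕ}
    (hcol : ∀ i, i < ν.sum → rcolTN ν δ T (j i) = c.getD i 0 + 1) (ℓ : ℕ) :
    {x' | ℓ + 1 ≤ rcolTN ν δ T x'} =
      ↑(((Finset.range ν.sum).filter fun i => ℓ ≤ c.getD i 0).image j) := by
  ext x'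
  simp only [Set.mem_ofPred_eq, Finset.coe_image, Finset.coe_filter, Finset.mem_range,
    Set.mem_image]
  constructor
  · intro hx'
    obtain ⟨i, hi, rfl⟩ := Finset.mem_image.1 (hj.image_range ▸
      hT.mem_Icc_of_rcolTN_ne_zero hδ (Nat.ne_zero_of_lt hx'))
    have := hcol i (Finset.mem_range.1 hi)
    exact ⟨i, ⟨Finset.mem_range.1 hi, by omega⟩, rfl⟩
  · rintro ⟨i, ⟨hi, hℓ⟩, rfl⟩
    rw [hcol i hi]
    omega

end Reindexing

theorem dn_right_interval_count_general (ν δ : List ℕ) (hδ : IsIncrement ν δ)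
    (j : ℕ → ℕ) (hj : RColOrder ν δ j)
    (T : Set (ℕ × ℕ)) (hT : IsDNTree ν δ T)
    (c : List ℕ)
    (hcol : ∀ i, i < ν.sum → rcolTN ν δ T (j i) = c.getD i 0 + 1)
    (ℓ : ℕ) (hℓ : 1 ≤ ℓ) :
    {B : Set (ℕ × ℕ) | IsRightDNItv ν δ B T ℓ}.ncard =
      ((Finset.range ν.sum).filter (fun i => ℓ ≤ c.getD i 0)).card := by
  rw [ncard_setOf_isRightDNItv hδ hT hℓ, setOf_succ_le_rcolTN_eq hδ hT hj hcol,
    Set.ncard_coe_finset]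
  exact Finset.card_image_of_injOn fun a ha b hb =>
    hj.2.1 a b (Finset.mem_range.1 (Finset.mem_filter.1 ha).1)
      (Finset.mem_range.1 (Finset.mem_filter.1 hb).1)

/-- Let `T` be a (δ,ν)-tree with reduced column vector
`c̄_δ(T) = (c̄_0, …, c̄_{m−1})`.  The number of right intervals of length
`ℓ ≥ 1` with top element `T` in the rotation poset of (δ,ν)-trees equals
`|{0 ≤ i ≤ m−1 : c̄_i ≥ ℓ}|`. -/
theorem dn_right_interval_count (ν δ : List ℕ) (hν : ν ≠ []) (hδ : IsIncrement ν δ)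
    (j : ℕ → ℕ) (hj : RColOrder ν δ j)
    (T : Set (ℕ × ℕ)) (hT : IsDNTree ν δ T)
    (c : List ℕ) (hc : c.length = ν.sum)
    (hcol : ∀ i, i < ν.sum → rcolTN ν δ T (j i) = c.getD i 0 + 1)
    (ℓ : ℕ) (hℓ : 1 ≤ ℓ) :
    {B : Set (ℕ × ℕ) | IsRightDNItv ν δ B T ℓ}.ncard =
      ((Finset.range ν.sum).filter (fun i => ℓ ≤ c.getD i 0)).card :=
  dn_right_interval_count_general ν δ hδ j hj T hT c hcol ℓ hℓ
end
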